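/- arXiv:2505.14189 — 6 statements merged into one kernel-verified Lean document; each statement's English description precedes it below -/
import Mathlib

section
/- In a corank-1 point configuration P in ℝ^d (i.e., |P| = dim(aff P) + 2), every point p ∈ P lies on at most one inclusion-minimal affine flat spanned by points of P∖{p}. -/
open Finset

/-- If a family is affinely independent and a point lies in the affine spans of the images of
two index sets, then it lies in the span of the image of their intersection. -/
theorem aux_mem_affineSpan_inter {d : ℕ} {ι : Type*} {q : ι → (Fin d → ℝ)}
    (ha : AffineIndependent ℝ q) {s1 s2 : Set ι} {p0 : Fin d → ℝ}
    (h1 : p0 ∈ affineSpan ℝ (q '' s1)) (h2 : p0 ∈ affineSpan ℝ (q '' s2)) :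
    p0 ∈ affineSpan ℝ (q '' (s1 ∩ s2)) := by
  classical
  rw [Set.image_eq_range] at h1 h2
  rw [mem_affineSpan_iff_eq_affineCombination, ←
    Finset.eq_affineCombination_subset_iff_eq_affineCombination_subtype] at h1 h2
  rcases h1 with ⟨fs1, hfs1, w1, hw1, hp1⟩
  rcases h2 with ⟨fs2, hfs2, w2, hw2, hp2⟩
  have hind := (affineIndependent_iff_indicator_eq_of_affineCombination_eq ℝ q).mp ha
    fs1 fs2 w1 w2 hw1 hw2 (hp1 ▸ hp2)
  have hzero : ∀ i ∈ fs1, i ∉ fs2 → w1 i = 0 := by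
    intro i hi1 hi2
    have := congrFun hind i
    rw [Set.indicator_of_mem (Finset.mem_coe.2 hi1), Set.indicator_of_notMem
      (by simpa using hi2)] at this
    exact this
  have hsum : ∑ i ∈ fs1 ∩ fs2, w1 i = 1 := by
    rw [← hw1]
    exact (Finset.sum_subset (Finset.inter_subset_left)
      (fun i hi hni => hzero i hi (fun h => hni (Finset.mem_inter.2 ⟨hi, h⟩))))
  have hcomb : p0 = (fs1 ∩ fs2).affineCombination ℝ q w1 := by
    rw [hp1]
    rw [Finset.affineCombination_indicator_subset w1 q (Finset.inter_subset_left (s₂ := fs2))]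
    apply Finset.affineCombination_congr
    · intro i hi
      by_cases h2 : i ∈ fs2
      · rw [Set.indicator_of_mem (by simpa using Finset.mem_inter.2 ⟨hi, h2⟩)]
      · rw [Set.indicator_of_notMem (by simpa using fun _ => h2), hzero i hi h2]
    · intro _ _; rfl
  rw [Set.image_eq_range, mem_affineSpan_iff_eq_affineCombination, ←
    Finset.eq_affineCombination_subset_iff_eq_affineCombination_subtype]
  exact ⟨fs1 ∩ fs2, by
    intro i hi
    rcases Finset.mem_inter.1 hi with ⟨hi1, hi2⟩
    exact ⟨hfs1 hi1, hfs2 hi2⟩, w1, hsum, hcomb⟩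

/-- in a corank-1 point configuration `P` in `ℝ^d`
(cardinality = dimension of affine hull + 2), every point `p ∈ P` lies on at most
one inclusion-minimal affine flat spanned by points of `P \ {p}`. -/
theorem corank_one_unique_minimal_flat {d : ℕ} (P : Finset (Fin d → ℝ))
    (hcorank : P.card =
      Module.finrank ℝ (affineSpan ℝ (P : Set (Fin d → ℝ))).direction + 2) :
    ∀ p ∈ P, ∀ S T : Finset (Fin d → ℝ), S ⊆ P.erase p → T ⊆ P.erase p →
      p ∈ affineSpan ℝ (S : Set (Fin d → ℝ)) →
      p ∈ affineSpan ℝ (T : Set (Fin d → ℝ)) →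
      (∀ S' : Finset (Fin d → ℝ), S' ⊆ P.erase p →
        p ∈ affineSpan ℝ (S' : Set (Fin d → ℝ)) →
        ¬ affineSpan ℝ (S' : Set (Fin d → ℝ)) < affineSpan ℝ (S : Set (Fin d → ℝ))) →
      (∀ T' : Finset (Fin d → ℝ), T' ⊆ P.erase p →
        p ∈ affineSpan ℝ (T' : Set (Fin d → ℝ)) →
        ¬ affineSpan ℝ (T' : Set (Fin d → ℝ)) < affineSpan ℝ (T : Set (Fin d → ℝ))) →
      affineSpan ℝ (S : Set (Fin d → ℝ)) = affineSpan ℝ (T : Set (Fin d → ℝ)) := by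
  classical
  intro p hp S T hS hT hpS hpT hminS hminT
  -- p is in the span of the erased set
  have hpE : p ∈ affineSpan ℝ ((P.erase p : Finset _) : Set (Fin d → ℝ)) :=
    affineSpan_mono ℝ (by exact_mod_cast hS) hpS
  -- span of erase = span of P
  have hspanE : affineSpan ℝ ((P.erase p : Finset _) : Set (Fin d → ℝ)) =
      affineSpan ℝ (P : Set (Fin d → ℝ)) := by
    conv_rhs => rw [← Finset.insert_erase hp]
    rw [Finset.coe_insert, affineSpan_insert_eq_affineSpan ℝ hpE]
  -- cardinality of the erased set
  have hcardE : (P.erase p).card =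
      Module.finrank ℝ (affineSpan ℝ (P : Set (Fin d → ℝ))).direction + 1 := by
    rw [Finset.card_erase_of_mem hp, hcorank]; omega
  -- the erased set is affinely independent
  have hindep : AffineIndependent ℝ ((↑) : ↥(P.erase p) → (Fin d → ℝ)) := by
    rw [affineIndependent_iff_finrank_vectorSpan_eq
      (k := ℝ) ((↑) : ↥(P.erase p) → (Fin d → ℝ))
      (by rw [Fintype.card_coe]; exact hcardE)]
    rw [Subtype.range_coe_subtype]
    have : {x | x ∈ (P.erase p : Finset _)} = ((P.erase p : Finset _) : Set (Fin d → ℝ)) := rfl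
    rw [this, ← direction_affineSpan, hspanE]
  -- index sets
  set q : ↥(P.erase p) → (Fin d → ℝ) := ((↑) : ↥(P.erase p) → (Fin d → ℝ)) with hq
  have himg : ∀ U : Finset (Fin d → ℝ), U ⊆ P.erase p →
      q '' {x : ↥(P.erase p) | (x : Fin d → ℝ) ∈ U} = (U : Set (Fin d → ℝ)) := by
    intro U hU
    ext y
    constructor
    · rintro ⟨x, hx, rfl⟩; exact hx
    · intro hy; exact ⟨⟨y, hU hy⟩, hy, rfl⟩
  have h1 : p ∈ affineSpan ℝ (q '' {x : ↥(P.erase p) | (x : Fin d → ℝ) ∈ S}) := by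
    rw [himg S hS]; exact hpS
  have h2 : p ∈ affineSpan ℝ (q '' {x : ↥(P.erase p) | (x : Fin d → ℝ) ∈ T}) := by
    rw [himg T hT]; exact hpT
  have hinter := aux_mem_affineSpan_inter hindep h1 h2
  have himg2 : q '' ({x : ↥(P.erase p) | (x : Fin d → ℝ) ∈ S} ∩
      {x : ↥(P.erase p) | (x : Fin d → ℝ) ∈ T}) = ((S ∩ T : Finset _) : Set (Fin d → ℝ)) := by
    rw [← himg (S ∩ T) (Finset.Subset.trans (Finset.inter_subset_left) hS)]
    ext x
    simp [Set.mem_inter_iff]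
  rw [himg2] at hinter
  have hST : S ∩ T ⊆ P.erase p := Finset.Subset.trans (Finset.inter_subset_left) hS
  have hle1 : affineSpan ℝ ((S ∩ T : Finset _) : Set (Fin d → ℝ)) ≤
      affineSpan ℝ (S : Set (Fin d → ℝ)) :=
    affineSpan_mono ℝ (by exact_mod_cast Finset.inter_subset_left)
  have hle2 : affineSpan ℝ ((S ∩ T : Finset _) : Set (Fin d → ℝ)) ≤
      affineSpan ℝ (T : Set (Fin d → ℝ)) :=
    affineSpan_mono ℝ (by exact_mod_cast Finset.inter_subset_right)
  have heq1 : affineSpan ℝ ((S ∩ T : Finset _) : Set (Fin d → ℝ)) =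
      affineSpan ℝ (S : Set (Fin d → ℝ)) :=
    hle1.eq_of_not_lt (hminS (S ∩ T) hST hinter) |>.symm ▸ rfl
  have heq2 : affineSpan ℝ ((S ∩ T : Finset _) : Set (Fin d → ℝ)) =
      affineSpan ℝ (T : Set (Fin d → ℝ)) :=
    hle2.eq_of_not_lt (hminT (S ∩ T) hST hinter) |>.symm ▸ rfl
  rw [← heq1, heq2]
end

section
/- Arithmetic complexity avoiding a forbidden value: let g ∈ ℚ have arithmetic complexity c, and let f ∈ ℝ∖{0,1,g}. Then there exists a sequence (u_0,…,u_{k+1}) of rationals with u_0=0, u_1=1, u_{k+1}=g, each u_i (i≥2) of the form u_s+u_t, u_s−u_t, u_s·u_t, or u_s/u_t (with u_t ≠ 0 for division) for indices s,t < i, such that no u_i equals f, and with k ≤ 3 + 2c. -/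
/-- `u` is an arithmetic computation sequence of length `k` (plus the two seeds):
`u 0 = 0`, `u 1 = 1`, and each `u i` for `2 ≤ i ≤ k+1` is a sum, difference, product
or quotient (with nonzero denominator) of two earlier terms. -/
def IsCompSeq (u : ℕ → ℚ) (k : ℕ) : Prop :=
  u 0 = 0 ∧ u 1 = 1 ∧ ∀ i, 2 ≤ i → i ≤ k + 1 →
    ∃ s t, s < i ∧ t < i ∧
      (u i = u s + u t ∨ u i = u s - u t ∨ u i = u s * u t ∨
        (u t ≠ 0 ∧ u i = u s / u t))

/- Auxiliary development. -/

/-- One-step reachability from a set of available values. -/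
def Reach (S : Set ℚ) (x : ℚ) : Prop :=
  ∃ a ∈ S, ∃ b ∈ S, x = a + b ∨ x = a - b ∨ x = a * b ∨ (b ≠ 0 ∧ x = a / b)

/-- Step condition at index `j`. -/
def StepAt (v : ℕ → ℚ) (j : ℕ) : Prop :=
  ∃ s t, s < j ∧ t < j ∧
    (v j = v s + v t ∨ v j = v s - v t ∨ v j = v s * v t ∨
      (v t ≠ 0 ∧ v j = v s / v t))

/-- The signed encoding of a value, avoiding `q`. -/
def Tval (u : ℕ → ℚ) (q : ℚ) (i : ℕ) : ℚ := if u i = q then -u i else u i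

/-- Index of the encoded term in the new sequence. -/
def ridx (i : ℕ) : ℕ := if i ≤ 1 then i else 2 * i - 1

lemma Tval_ne (u : ℕ → ℚ) (q : ℚ) (hq0 : q ≠ 0) (i : ℕ) : Tval u q i ≠ q := by
  unfold Tval
  split
  · rename_i h
    rw [h]
    intro hh
    apply hq0
    linarith
  · assumption

lemma Tval_sign (u : ℕ → ℚ) (q : ℚ) (i : ℕ) :
    Tval u q i = u i ∨ Tval u q i = -u i := by
  unfold Tval; split
  · exact Or.inr rfl
  · exact Or.inl rfl

lemma ridx_le {i n : ℕ} (h : i ≤ n + 1) : ridx i ≤ 2 * n + 1 := by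
  unfold ridx; split <;> omega

lemma disj_of_signs (us ut ui A B W : ℚ)
    (hA : A = us ∨ A = -us) (hB : B = ut ∨ B = -ut) (hW : W = ui ∨ W = -ui)
    (h : ui = us + ut ∨ ui = us - ut ∨ ui = us * ut ∨ (ut ≠ 0 ∧ ui = us / ut)) :
    W = A + B ∨ W = A - B ∨ W = B - A ∨ W = -(A + B) ∨
      W = A * B ∨ W = -(A * B) ∨ (B ≠ 0 ∧ (W = A / B ∨ W = -(A / B))) := by
  rcases hA with rfl | rfl <;> rcases hB with rfl | rfl <;> rcases hW with rfl | rfl <;>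
    rcases h with rfl | rfl | rfl | ⟨hnz, rfl⟩ <;>
  first
    | (left; ring1)
    | (right; left; ring1)
    | (right; right; left; ring1)
    | (right; right; right; left; ring1)
    | (right; right; right; right; left; ring1)
    | (right; right; right; right; right; left; ring1)
    | (right; right; right; right; right; right;
       refine ⟨?_, Or.inl ?_⟩
       · simpa using hnz
       · first
          | ring1
          | simp only [div_neg, neg_div, neg_neg]
          | (simp only [div_neg, neg_div, neg_neg]; ring1))
    | (right; right; right; right; right; right;
       refine ⟨?_, Or.inr ?_⟩
       · simpa using hnz
       · first
          | ring1
          | simp only [div_neg, neg_div, neg_neg]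
          | (simp only [div_neg, neg_div, neg_neg]; ring1))

lemma reach_avoid (q A B W : ℚ) (hq0 : q ≠ 0) (hq1 : q ≠ 1)
    (hA : A ≠ q) (hB : B ≠ q) (hW : W ≠ q)
    (h : W = A + B ∨ W = A - B ∨ W = B - A ∨ W = -(A + B) ∨
      W = A * B ∨ W = -(A * B) ∨ (B ≠ 0 ∧ (W = A / B ∨ W = -(A / B)))) :
    ∃ P, P ≠ q ∧ Reach {0, A, B} P ∧ Reach {0, A, B, P} W := by
  have h00 : (0 : ℚ) ≠ q := fun hh => hq0 hh.symm
  have hz : Reach {0, A, B} 0 := ⟨0, by simp, 0, by simp, Or.inl (by ring)⟩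
  rcases h with h | h | h | h | h | h | ⟨hBnz, h | h⟩
  · exact ⟨0, h00, hz, A, by simp, B, by simp, Or.inl h⟩
  · exact ⟨0, h00, hz, A, by simp, B, by simp, Or.inr (Or.inl h)⟩
  · exact ⟨0, h00, hz, B, by simp, A, by simp, Or.inr (Or.inl h)⟩
  · -- W = -(A + B)
    by_cases h1 : -A = q
    · by_cases h2 : A + B = q
      · have h3 : 0 - B ≠ q := by intro hh; apply hq0; linarith
        exact ⟨0 - B, h3, ⟨0, by simp, B, by simp, Or.inr (Or.inl rfl)⟩,
          ⟨0 - B, by simp, A, by simp, Or.inr (Or.inl (by rw [h]; ring))⟩⟩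
      · exact ⟨A + B, h2, ⟨A, by simp, B, by simp, Or.inl rfl⟩,
          ⟨0, by simp, A + B, by simp, Or.inr (Or.inl (by rw [h]; ring))⟩⟩
    · exact ⟨0 - A, by simpa using h1, ⟨0, by simp, A, by simp, Or.inr (Or.inl rfl)⟩,
        ⟨0 - A, by simp, B, by simp, Or.inr (Or.inl (by rw [h]; ring))⟩⟩
  · exact ⟨0, h00, hz, A, by simp, B, by simp, Or.inr (Or.inr (Or.inl h))⟩
  · -- W = -(A * B)
    by_cases h1 : -A = q
    · by_cases h2 : A * B = q
      · have h3 : q * B = q * (-1) := by linear_combination (-B) * h1 - h2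
        have hB1 : B = -1 := mul_left_cancel₀ hq0 h3
        have h4 : 0 - B ≠ q := by
          rw [hB1]; intro hh; exact hq1 (by linarith)
        exact ⟨0 - B, h4, ⟨0, by simp, B, by simp, Or.inr (Or.inl rfl)⟩,
          ⟨0 - B, by simp, A, by simp, Or.inr (Or.inr (Or.inl (by rw [h]; ring)))⟩⟩
      · exact ⟨A * B, h2, ⟨A, by simp, B, by simp, Or.inr (Or.inr (Or.inl rfl))⟩,
          ⟨0, by simp, A * B, by simp, Or.inr (Or.inl (by rw [h]; ring))⟩⟩
    · exact ⟨0 - A, by simpa using h1, ⟨0, by simp, A, by simp, Or.inr (Or.inl rfl)⟩,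
        ⟨0 - A, by simp, B, by simp, Or.inr (Or.inr (Or.inl (by rw [h]; ring)))⟩⟩
  · -- W = A / B
    exact ⟨0, h00, hz, A, by simp, B, by simp, Or.inr (Or.inr (Or.inr ⟨hBnz, h⟩))⟩
  · -- W = -(A / B)
    by_cases h1 : -A = q
    · by_cases h2 : A / B = q
      · have hAe : A = q * B := (div_eq_iff hBnz).mp h2
        have h3 : q * B = q * (-1) := by linear_combination -hAe - h1
        have hB1 : B = -1 := mul_left_cancel₀ hq0 h3
        have h4 : 0 - B ≠ q := by
          rw [hB1]; intro hh; exact hq1 (by linarith)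
        have h5 : 0 - B ≠ 0 := by rw [hB1]; norm_num
        refine ⟨0 - B, h4, ⟨0, by simp, B, by simp, Or.inr (Or.inl rfl)⟩,
          ⟨A, by simp, 0 - B, by simp, Or.inr (Or.inr (Or.inr ⟨h5, ?_⟩))⟩⟩
        rw [h, hB1]; ring1
      · exact ⟨A / B, h2, ⟨A, by simp, B, by simp, Or.inr (Or.inr (Or.inr ⟨hBnz, rfl⟩))⟩,
          ⟨0, by simp, A / B, by simp, Or.inr (Or.inl (by rw [h]; ring))⟩⟩
    · refine ⟨0 - A, by simpa using h1, ⟨0, by simp, A, by simp, Or.inr (Or.inl rfl)⟩,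
        ⟨0 - A, by simp, B, by simp, Or.inr (Or.inr (Or.inr ⟨hBnz, ?_⟩))⟩⟩
      rw [h]; ring

lemma avoid_main (u : ℕ → ℚ) (c : ℕ) (q : ℚ) (hu : IsCompSeq u c)
    (hq0 : q ≠ 0) (hq1 : q ≠ 1) :
    ∀ n, n ≤ c → ∃ v : ℕ → ℚ,
      v 0 = 0 ∧ v 1 = 1 ∧
      (∀ i ≤ n + 1, v (ridx i) = Tval u q i) ∧
      (∀ j, 2 ≤ j → j ≤ 2 * n + 1 → StepAt v j) ∧
      (∀ j ≤ 2 * n + 1, v j ≠ q) := by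
  have hT0 : Tval u q 0 = 0 := by simp [Tval, hu.1, Ne.symm hq0]
  have hT1 : Tval u q 1 = 1 := by simp [Tval, hu.2.1, Ne.symm hq1]
  intro n
  induction n with
  | zero =>
    intro _
    refine ⟨fun j => if j = 0 then 0 else 1, by simp, by simp, ?_, by omega, ?_⟩
    · intro i hi
      interval_cases i
      · simpa [ridx] using hT0.symm
      · simpa [ridx] using hT1.symm
    · intro j hj
      interval_cases j
      · simpa using Ne.symm hq0
      · simpa using Ne.symm hq1
  | succ m ih =>
    intro hm
    obtain ⟨v, hv0, hv1, hagree, hsteps, hnq⟩ := ih (by omega)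
    obtain ⟨s, t, hs, ht, hop⟩ := hu.2.2 (m + 2) (by omega) (by omega)
    set A := Tval u q s with hAdef
    set B := Tval u q t with hBdef
    set W := Tval u q (m + 2) with hWdef
    have hA : A ≠ q := Tval_ne u q hq0 s
    have hB : B ≠ q := Tval_ne u q hq0 t
    have hW : W ≠ q := Tval_ne u q hq0 (m + 2)
    have hdisj := disj_of_signs (u s) (u t) (u (m + 2)) A B W
      (Tval_sign u q s) (Tval_sign u q t) (Tval_sign u q (m + 2)) hop
    obtain ⟨P, hPq, hPreach, hWreach⟩ := reach_avoid q A B W hq0 hq1 hA hB hW hdisj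
    have hsle : ridx s ≤ 2 * m + 1 := ridx_le (by omega)
    have htle : ridx t ≤ 2 * m + 1 := ridx_le (by omega)
    have hvA : v (ridx s) = A := hagree s (by omega)
    have hvB : v (ridx t) = B := hagree t (by omega)
    refine ⟨fun j => if j = 2 * m + 2 then P else if j = 2 * m + 3 then W else v j,
      ?_, ?_, ?_, ?_, ?_⟩
    · simp only [show ¬(0 = 2 * m + 2) by omega, show ¬(0 = 2 * m + 3) by omega,
        if_neg, if_false]
      simpa using hv0
    · simp only [show ¬(1 = 2 * m + 2) by omega, show ¬(1 = 2 * m + 3) by omega,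
        if_neg, if_false]
      simpa using hv1
    · intro i hi
      by_cases hi' : i ≤ m + 1
      · have : ridx i ≤ 2 * m + 1 := ridx_le hi'
        simp only [show ¬(ridx i = 2 * m + 2) by omega, show ¬(ridx i = 2 * m + 3) by omega,
          if_false]
        exact hagree i hi'
      · have hieq : i = m + 2 := by omega
        subst hieq
        have : ridx (m + 2) = 2 * m + 3 := by unfold ridx; split <;> omega
        rw [this]
        simp [hWdef]
    · -- steps
      intro j hj2 hjle
      -- helper: membership → availability
      have havail : ∀ x ∈ ({0, A, B} : Set ℚ), ∃ ix, ix ≤ 2 * m + 1 ∧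
          (fun j => if j = 2 * m + 2 then P else if j = 2 * m + 3 then W else v j) ix = x := by
        intro x hx
        rcases hx with rfl | rfl | rfl
        · exact ⟨0, by omega, by
            simp only [show ¬(0 = 2 * m + 2) by omega, show ¬(0 = 2 * m + 3) by omega, if_false]
            simpa using hv0⟩
        · exact ⟨ridx s, hsle, by
            simp only [show ¬(ridx s = 2 * m + 2) by omega, show ¬(ridx s = 2 * m + 3) by omega,
              if_false]
            exact hvA⟩
        · exact ⟨ridx t, htle, by
            simp only [show ¬(ridx t = 2 * m + 2) by omega, show ¬(ridx t = 2 * m + 3) by omega,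
              if_false]
            exact hvB⟩
      by_cases hjold : j ≤ 2 * m + 1
      · obtain ⟨s', t', hs', ht', hcase⟩ := hsteps j hj2 hjold
        refine ⟨s', t', hs', ht', ?_⟩
        simp only [show ¬(j = 2 * m + 2) by omega, show ¬(j = 2 * m + 3) by omega,
          show ¬(s' = 2 * m + 2) by omega, show ¬(s' = 2 * m + 3) by omega,
          show ¬(t' = 2 * m + 2) by omega, show ¬(t' = 2 * m + 3) by omega, if_false]
        exact hcase
      · by_cases hjP : j = 2 * m + 2
        · subst hjP
          obtain ⟨x, hx, y, hy, hcase⟩ := hPreach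
          obtain ⟨ix, hix, hvx⟩ := havail x hx
          obtain ⟨iy, hiy, hvy⟩ := havail y hy
          refine ⟨ix, iy, by omega, by omega, ?_⟩
          rw [hvx, hvy]
          simpa using hcase
        · have hjW : j = 2 * m + 3 := by omega
          subst hjW
          obtain ⟨x, hx, y, hy, hcase⟩ := hWreach
          have havail' : ∀ x ∈ ({0, A, B, P} : Set ℚ), ∃ ix, ix ≤ 2 * m + 2 ∧
              (fun j => if j = 2 * m + 2 then P else if j = 2 * m + 3 then W else v j) ix = x := by
            intro x hx
            rcases hx with rfl | hx'
            · exact ⟨0, by omega, by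
                simp only [show ¬(0 = 2 * m + 2) by omega, show ¬(0 = 2 * m + 3) by omega,
                  if_false]
                simpa using hv0⟩
            · rcases hx' with rfl | rfl | rfl
              · exact ⟨ridx s, by omega, by
                  simp only [show ¬(ridx s = 2 * m + 2) by omega,
                    show ¬(ridx s = 2 * m + 3) by omega, if_false]
                  exact hvA⟩
              · exact ⟨ridx t, by omega, by
                  simp only [show ¬(ridx t = 2 * m + 2) by omega,
                    show ¬(ridx t = 2 * m + 3) by omega, if_false]
                  exact hvB⟩
              · exact ⟨2 * m + 2, by omega, by simp⟩
          obtain ⟨ix, hix, hvx⟩ := havail' x hx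
          obtain ⟨iy, hiy, hvy⟩ := havail' y hy
          refine ⟨ix, iy, by omega, by omega, ?_⟩
          rw [hvx, hvy]
          simpa using hcase
    · intro j hjle
      by_cases hjP : j = 2 * m + 2
      · subst hjP; simpa using hPq
      · by_cases hjW : j = 2 * m + 3
        · subst hjW; simpa using hW
        · simp only [if_neg hjP, if_neg hjW]
          exact hnq j (by omega)

lemma avoid_q (u : ℕ → ℚ) (c : ℕ) (q g : ℚ) (hu : IsCompSeq u c) (hg : u (c + 1) = g)
    (hq0 : q ≠ 0) (hq1 : q ≠ 1) (hqg : q ≠ g) :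
    ∃ v : ℕ → ℚ, IsCompSeq v (2 * c + 1) ∧ v (2 * c + 2) = g ∧
      ∀ i ≤ 2 * c + 2, v i ≠ q := by
  obtain ⟨v, hv0, hv1, hagree, hsteps, hnq⟩ := avoid_main u c q hu hq0 hq1 c le_rfl
  have hTg : Tval u q (c + 1) = g := by
    unfold Tval; rw [hg, if_neg (Ne.symm hqg)]
  have hgv : v (ridx (c + 1)) = g := by rw [hagree (c + 1) le_rfl, hTg]
  have hridx : ridx (c + 1) ≤ 2 * c + 1 := ridx_le le_rfl
  refine ⟨fun j => if j = 2 * c + 2 then g else v j, ⟨?_, ?_, ?_⟩, by exact if_pos rfl, ?_⟩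
  · simp only [show ¬(0 = 2 * c + 2) by omega, if_false]; exact hv0
  · simp only [show ¬(1 = 2 * c + 2) by omega, if_false]; exact hv1
  · intro i hi2 hile
    by_cases hiold : i ≤ 2 * c + 1
    · obtain ⟨s', t', hs', ht', hcase⟩ := hsteps i hi2 hiold
      refine ⟨s', t', hs', ht', ?_⟩
      simp only [show ¬(i = 2 * c + 2) by omega, show ¬(s' = 2 * c + 2) by omega,
        show ¬(t' = 2 * c + 2) by omega, if_false]
      exact hcase
    · have hieq : i = 2 * c + 2 := by omega
      subst hieq
      refine ⟨ridx (c + 1), 0, by omega, by omega, Or.inl ?_⟩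
      simp only [show ¬(ridx (c + 1) = 2 * c + 2) by omega,
        show ¬(0 = 2 * c + 2) by omega, if_false, if_true, eq_self_iff_true]
      rw [hgv, hv0, add_zero]
  · intro i hile
    by_cases hieq : i = 2 * c + 2
    · subst hieq; simpa using Ne.symm hqg
    · simp only [if_neg hieq]
      exact hnq i (by omega)

/-- if `g` has arithmetic complexity `c` and `f ∉ {0, 1, g}`, then `g`
admits a computation sequence of length `k ≤ 3 + 2c` avoiding the value `f`. -/
theorem comp_seq_avoiding_forbidden_value (g : ℚ) (c : ℕ)
    (hc : IsLeast {k : ℕ | ∃ u : ℕ → ℚ, IsCompSeq u k ∧ u (k + 1) = g} c)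
    (f : ℝ) (hf0 : f ≠ 0) (hf1 : f ≠ 1) (hfg : f ≠ (g : ℝ)) :
    ∃ k ≤ 3 + 2 * c, ∃ u : ℕ → ℚ, IsCompSeq u k ∧ u (k + 1) = g ∧
      ∀ i ≤ k + 1, (u i : ℝ) ≠ f := by
  obtain ⟨u, hu, hg⟩ := hc.1
  by_cases hfq : ∃ q : ℚ, (q : ℝ) = f
  · obtain ⟨q, rfl⟩ := hfq
    have hq0 : q ≠ 0 := by exact_mod_cast hf0
    have hq1 : q ≠ 1 := by exact_mod_cast hf1
    have hqg : q ≠ g := by exact_mod_cast hfg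
    obtain ⟨v, hv, hvg, hvnq⟩ := avoid_q u c q g hu hg hq0 hq1 hqg
    refine ⟨2 * c + 1, by omega, v, hv, by simpa using hvg, ?_⟩
    intro i hi
    have := hvnq i (by omega)
    exact_mod_cast fun hh => this (by exact_mod_cast hh)
  · exact ⟨c, by omega, u, hu, hg, fun i _ hh => hfq ⟨u i, hh⟩⟩
end

section
/- Dyadic bisection bound: for every real x with |x| ≥ 1/2 and every ε ∈ (0,1), there exist rationals g_− < x < g_+ with 0 ∉ [g_−, g_+], g_+ − g_− ≤ ε, and such that both g_− and g_+ appear in a common arithmetic computation sequence (starting from 0 and 1, using +, −, ×, ÷) of length at most c(x) + 2⌈log_2(1/ε)⌉ + 3, where c(x) is the arithmetic complexity of the nearest-integer rounding of x (rounding away from 0 in case of ties, which is nonzero since |x| ≥ 1/2). -/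
lemma IsCompSeq.snoc {u : ℕ → ℚ} {k : ℕ} (h : IsCompSeq u k) {s t : ℕ}
    (hs : s ≤ k + 1) (ht : t ≤ k + 1) (q : ℚ)
    (hq : q = u s + u t ∨ q = u s - u t ∨ q = u s * u t ∨ (u t ≠ 0 ∧ q = u s / u t)) :
    IsCompSeq (Function.update u (k + 2) q) (k + 1) ∧
      (∀ i, i ≤ k + 1 → Function.update u (k + 2) q i = u i) ∧
      Function.update u (k + 2) q (k + 2) = q := by
  have hagree : ∀ i, i ≤ k + 1 → Function.update u (k + 2) q i = u i := by
    intro i hi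
    exact Function.update_of_ne (by omega) _ _
  refine ⟨⟨?_, ?_, ?_⟩, hagree, Function.update_self _ _ _⟩
  · rw [hagree 0 (by omega)]; exact h.1
  · rw [hagree 1 (by omega)]; exact h.2.1
  · intro i h2 hik
    by_cases hik2 : i = k + 2
    · subst hik2
      refine ⟨s, t, by omega, by omega, ?_⟩
      rw [hagree s hs, hagree t ht, Function.update_self]
      exact hq
    · obtain ⟨s', t', hs', ht', hop⟩ := h.2.2 i h2 (by omega)
      refine ⟨s', t', hs', ht', ?_⟩
      rw [hagree i (by omega), hagree s' (by omega), hagree t' (by omega)]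
      exact hop

def ones (n : ℕ) : ℕ := (Nat.digits 2 n).sum

lemma ones_zero : ones 0 = 0 := by simp [ones]

lemma ones_rec (m : ℕ) (hm : m ≠ 0) : ones m = m % 2 + ones (m / 2) := by
  unfold ones
  rw [Nat.digits_def' (by norm_num : 1 < 2) (Nat.pos_of_ne_zero hm)]
  simp [List.sum_cons]

lemma ones_lt_pow {n m : ℕ} (h : m < 2 ^ n) : ones m ≤ n := by
  induction n generalizing m with
  | zero => interval_cases m; simp [ones_zero]
  | succ n ih =>
      rcases Nat.eq_zero_or_pos m with rfl | hm
      · simp [ones_zero]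
      · rw [ones_rec m (by omega)]
        have h1 : m / 2 < 2 ^ n := by omega
        have := ih h1
        have : m % 2 ≤ 1 := by omega
        omega

lemma ones_two_pow (n : ℕ) : ones (2 ^ n) = 1 := by
  induction n with
  | zero => norm_num [ones, Nat.digits_def' (by norm_num : 1 < 2) one_pos]
  | succ n ih =>
      rw [ones_rec (2 ^ (n+1)) (by positivity)]
      have h1 : 2 ^ (n + 1) % 2 = 0 := by
        simp [Nat.pow_succ, Nat.mul_mod_left]
      have h2 : 2 ^ (n + 1) / 2 = 2 ^ n := by
        rw [Nat.pow_succ, Nat.mul_div_cancel _ (by norm_num)]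
      rw [h1, h2, ih]

lemma ones_le_of_le_pow {n m : ℕ} (hn : 1 ≤ n) (h : m ≤ 2 ^ n) : ones m ≤ n := by
  rcases eq_or_lt_of_le h with rfl | hlt
  · rw [ones_two_pow]; omega
  · exact ones_lt_pow hlt

lemma exists_pows (L : ℕ) {u : ℕ → ℚ} {k : ℕ} (h : IsCompSeq u k) :
    ∃ k', k' ≤ k + L + 1 ∧ k ≤ k' ∧ ∃ u', IsCompSeq u' k' ∧
      (∀ i, i ≤ k + 1 → u' i = u i) ∧
      (∃ i, i ≤ k' + 1 ∧ u' i = 2) ∧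
      (∀ l, l ≤ L → ∃ i, i ≤ k' + 1 ∧ u' i = (1/2 : ℚ) ^ l) := by
  induction L with
  | zero =>
      obtain ⟨h2, hag, hval⟩ := h.snoc (s := 1) (t := 1) (by omega) (by omega) 2
        (Or.inl (by rw [h.2.1]; norm_num))
      refine ⟨k + 1, by omega, by omega, _, h2, ?_, ⟨k + 2, by omega, hval⟩, ?_⟩
      · intro i hi; exact hag i hi
      · intro l hl
        interval_cases l
        refine ⟨1, by omega, ?_⟩
        rw [hag 1 (by omega), h.2.1]; norm_num
  | succ L ih =>
      obtain ⟨k', hk', hkk', u', hu', hag, ⟨i2, hi2, hv2⟩, hd⟩ := ih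
      obtain ⟨iL, hiL, hvL⟩ := hd L (le_refl _)
      have hne : u' i2 ≠ 0 := by rw [hv2]; norm_num
      obtain ⟨h2, hag2, hval2⟩ := hu'.snoc (s := iL) (t := i2) hiL hi2
        ((1/2 : ℚ) ^ (L + 1))
        (Or.inr (Or.inr (Or.inr ⟨hne, by rw [hvL, hv2]; ring⟩)))
      refine ⟨k' + 1, by omega, by omega, _, h2, ?_, ⟨i2, by omega, by rw [hag2 i2 hi2]; exact hv2⟩, ?_⟩
      · intro i hi; rw [hag2 i (by omega)]; exact hag i hi
      · intro l hl
        rcases Nat.lt_or_ge l (L + 1) with hlt | hge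
        · obtain ⟨i, hi, hv⟩ := hd l (by omega)
          exact ⟨i, by omega, by rw [hag2 i hi]; exact hv⟩
        · have : l = L + 1 := by omega
          subst this
          exact ⟨k' + 2, by omega, hval2⟩

/-- Build `b + σ * (m / 2^L)` from `b` and the powers `(1/2)^l`, in `ones m` steps. -/
lemma exists_dyadic (L : ℕ) :
    ∀ (m : ℕ), m < 2 ^ L → ∀ (u : ℕ → ℚ) (k : ℕ) (σ b : ℚ) (ib : ℕ),
    IsCompSeq u k → (σ = 1 ∨ σ = -1) → ib ≤ k + 1 → u ib = b →
    (∀ l, 1 ≤ l → l ≤ L → ∃ i, i ≤ k + 1 ∧ u i = (1/2 : ℚ) ^ l) →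
    ∃ k', k' ≤ k + ones m ∧ k ≤ k' ∧ ∃ u', IsCompSeq u' k' ∧
      (∀ i, i ≤ k + 1 → u' i = u i) ∧
      ∃ i, i ≤ k' + 1 ∧ u' i = b + σ * ((m : ℚ) / 2 ^ L) := by
  induction L with
  | zero =>
      intro m hm u k σ b ib hu hσ hib hb hd
      interval_cases m
      refine ⟨k, by simp [ones_zero], le_refl _, u, hu, fun i _ => rfl, ib, hib, ?_⟩
      rw [hb]; ring
  | succ L ih =>
      intro m hm u k σ b ib hu hσ hib hb hd
      rcases Nat.eq_zero_or_pos m with rfl | hm0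
      · refine ⟨k, by simp [ones_zero], le_refl _, u, hu, fun i _ => rfl, ib, hib, ?_⟩
        rw [hb]; push_cast; ring
      -- m = 2 * (m/2) + m % 2
      obtain ⟨k', hk', hkk', u', hu', hag, i', hi', hv'⟩ :=
        ih (m / 2) (by omega) u k σ b ib hu hσ hib hb
          (fun l h1 hL => hd l h1 (by omega))
      rcases Nat.even_or_odd m with he | ho
      · -- m even : value already equals target
        refine ⟨k', by have := ones_rec m (by omega); omega, hkk', u', hu', hag, i', hi', ?_⟩
        · rw [hv']
          have h2 : (m : ℚ) / 2 ^ (L + 1) = ((m / 2 : ℕ) : ℚ) / 2 ^ L := by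
            obtain ⟨c, hc⟩ := he
            have : m / 2 = c := by omega
            rw [this, hc]; push_cast; ring
          rw [h2]
      · -- m odd : add or subtract (1/2)^(L+1)
        obtain ⟨id, hid, hvd⟩ := hd (L + 1) (by omega) (le_refl _)
        have hid' : id ≤ k' + 1 := by omega
        have hvd' : u' id = (1/2 : ℚ) ^ (L + 1) := by rw [hag id hid]; exact hvd
        set w : ℚ := b + σ * ((m / 2 : ℕ) : ℚ) / 2 ^ L with hw
        have hop : b + σ * ((m:ℚ) / 2 ^ (L+1)) = u' i' + σ * u' id := by
          rw [hv', hvd']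
          obtain ⟨c, hc⟩ := ho
          have : m / 2 = c := by omega
          rw [this, hc]; push_cast; rw [div_pow, one_pow]; ring
        rcases hσ with rfl | rfl
        · obtain ⟨h2, hag2, hval2⟩ := hu'.snoc hi' hid' (b + 1 * ((m:ℚ) / 2 ^ (L+1)))
            (Or.inl (by rw [hop]; ring))
          refine ⟨k' + 1, ?_, by omega, _, h2, ?_, k' + 2, by omega, hval2⟩
          · have := ones_rec m (by omega)
            have : m % 2 = 1 := Nat.odd_iff.mp ho
            omega
          · intro i hi; rw [hag2 i (by omega)]; exact hag i hi
        · obtain ⟨h2, hag2, hval2⟩ := hu'.snoc hi' hid' (b + (-1) * ((m:ℚ) / 2 ^ (L+1)))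
            (Or.inr (Or.inl (by rw [hop]; ring)))
          refine ⟨k' + 1, ?_, by omega, _, h2, ?_, k' + 2, by omega, hval2⟩
          · have := ones_rec m (by omega)
            have : m % 2 = 1 := Nat.odd_iff.mp ho
            omega
          · intro i hi; rw [hag2 i (by omega)]; exact hag i hi

/-- dyadic bisection bound. Here `a` is the nearest-integer rounding
of `x` (away from `0` in ties, hence nonzero since `|x| ≥ 1/2`), of arithmetic
complexity `c`. -/
theorem dyadic_bisection_bound (x : ℝ) (hx : 1 / 2 ≤ |x|)
    (ε : ℝ) (hε0 : 0 < ε) (hε1 : ε < 1)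
    (a : ℤ) (ha : |x - (a : ℝ)| ≤ 1 / 2) (ha0 : a ≠ 0)
    (c : ℕ) (hc : IsLeast {k : ℕ | ∃ u : ℕ → ℚ, IsCompSeq u k ∧ u (k + 1) = (a : ℚ)} c) :
    ∃ gm gp : ℚ, (gm : ℝ) < x ∧ x < (gp : ℝ) ∧ ¬(gm ≤ 0 ∧ 0 ≤ gp) ∧
      (gp : ℝ) - (gm : ℝ) ≤ ε ∧
      ∃ k ≤ c + 2 * ⌈Real.logb 2 (1 / ε)⌉₊ + 3, ∃ u : ℕ → ℚ, IsCompSeq u k ∧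
        (∃ i ≤ k + 1, u i = gm) ∧ (∃ j ≤ k + 1, u j = gp) := by
  obtain ⟨u₀, hu₀, ha₀⟩ := hc.1
  set n : ℕ := ⌈Real.logb 2 (1 / ε)⌉₊ with hn_def
  clear_value n
  have hn : 1 ≤ n := by
    have h1 : (1 : ℝ) < 1 / ε := by rw [lt_div_iff₀ hε0]; linarith
    have h2 := Real.logb_pos one_lt_two h1
    rw [hn_def]
    exact Nat.ceil_pos.mpr h2
  -- the crucial analytic bound : 1 / 2^n ≤ ε
  have h2npos : (0:ℝ) < 2 ^ n := by positivity
  have hpow : (1:ℝ) / 2 ^ n ≤ ε := by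
    have hlog : Real.logb 2 (1 / ε) ≤ (n : ℝ) := by rw [hn_def]; exact Nat.le_ceil _
    have h1 : (1:ℝ) / ε = 2 ^ Real.logb 2 (1 / ε) :=
      (Real.rpow_logb two_pos (by norm_num) (by positivity)).symm
    have h2 : (2:ℝ) ^ Real.logb 2 (1 / ε) ≤ (2:ℝ) ^ (n:ℝ) :=
      Real.rpow_le_rpow_of_exponent_le one_le_two hlog
    rw [Real.rpow_natCast] at h2
    have h3 : (1:ℝ) / ε ≤ 2 ^ n := by rw [h1]; exact h2
    rw [div_le_iff₀ hε0] at h3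
    rw [div_le_iff₀ h2npos]
    linarith
  have habs := abs_le.mp ha
  set y : ℝ := (x - a) * 2 ^ (n + 1) with hy_def
  clear_value y
  set M : ℤ := ⌈y⌉ - 1 with hM_def
  clear_value M
  have h2n1pos : (0:ℝ) < 2 ^ (n + 1) := by positivity
  have hexp : (2:ℝ) ^ (n+1) = 2 * 2 ^ n := by ring
  have hy1 : -(2 ^ n : ℝ) ≤ y := by
    rw [hy_def]
    have h := mul_le_mul_of_nonneg_right habs.1 (le_of_lt h2n1pos)
    rw [hexp] at h ⊢
    linarith
  have hy2 : y ≤ (2 ^ n : ℝ) := by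
    rw [hy_def]
    have h := mul_le_mul_of_nonneg_right habs.2 (le_of_lt h2n1pos)
    rw [hexp] at h ⊢
    linarith
  have hMlt : (M : ℝ) < y := by
    have := Int.ceil_lt_add_one y
    rw [hM_def]; push_cast; linarith
  have hMge : y ≤ (M : ℝ) + 1 := by
    have := Int.le_ceil y
    rw [hM_def]; push_cast; linarith
  -- integer bounds on M
  set P : ℕ := 2 ^ n with hP_def
  clear_value P
  have hPZ : ((P : ℤ) : ℝ) = (2 ^ n : ℝ) := by rw [hP_def]; push_cast; ring
  have hMub : M ≤ (P : ℤ) - 1 := by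
    have h1 : (M : ℝ) < ((P : ℤ) : ℝ) := by rw [hPZ]; linarith
    have h2 : M < (P : ℤ) := by exact_mod_cast h1
    omega
  have hMlb : -(P : ℤ) - 1 ≤ M := by
    have h1 : -((P : ℤ) : ℝ) ≤ (M : ℝ) + 1 := by rw [hPZ]; linarith
    have h2 : -((P:ℤ)) ≤ M + 1 := by exact_mod_cast h1
    omega
  have hP1 : 1 ≤ P := by rw [hP_def]; exact Nat.one_le_two_pow
  set m' : ℤ := if -(P : ℤ) ≤ M then M else M + 2 with hm'_def
  clear_value m'
  have hm'na : m'.natAbs ≤ P := by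
    rw [hm'_def]
    split_ifs with hcase
    · omega
    · omega
  have hm'cases : m' = M ∨ m' = M + 2 := by
    rw [hm'_def]; split_ifs <;> simp
  -- the two endpoints
  set gm : ℚ := (a : ℚ) + (M : ℚ) / 2 ^ (n + 1) with hgm_def
  clear_value gm
  set gp : ℚ := (a : ℚ) + ((M : ℚ) + 2) / 2 ^ (n + 1) with hgp_def
  clear_value gp
  have hgmR : (gm : ℝ) = (a : ℝ) + (M : ℝ) / 2 ^ (n + 1) := by
    rw [hgm_def]; push_cast; norm_num
  have hgpR : (gp : ℝ) = (a : ℝ) + ((M : ℝ) + 2) / 2 ^ (n + 1) := by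
    rw [hgp_def]; push_cast; norm_num
  have hgmx : (gm : ℝ) < x := by
    rw [hgmR]
    have : (M : ℝ) / 2 ^ (n+1) < x - a := by
      rw [div_lt_iff₀ h2n1pos]; rw [hy_def] at hMlt; linarith
    linarith
  have hxgp : x < (gp : ℝ) := by
    rw [hgpR]
    have : x - a < ((M : ℝ) + 2) / 2 ^ (n+1) := by
      rw [lt_div_iff₀ h2n1pos]; rw [hy_def] at hMge; linarith
    linarith
  have hgap : (gp : ℝ) - (gm : ℝ) = 1 / 2 ^ n := by
    rw [hgpR, hgmR]
    have : (2:ℝ) ^ (n+1) = 2 * 2 ^ n := by ring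
    field_simp
    ring
  have hgaple : (gp : ℝ) - (gm : ℝ) ≤ ε := by rw [hgap]; exact hpow
  -- half-power bound for the sign argument
  have hhalf : (1:ℝ) / 2 ^ n ≤ 1 / 2 := by
    rw [div_le_div_iff₀ h2npos (by norm_num)]
    have : (2:ℝ) ^ 1 ≤ 2 ^ n := pow_le_pow_right₀ one_le_two hn
    norm_num at this ⊢
    linarith
  have hsign : ¬(gm ≤ 0 ∧ 0 ≤ gp) := by
    rintro ⟨h1, h2⟩
    have h1R : (gm : ℝ) ≤ 0 := by exact_mod_cast h1
    have h2R : (0 : ℝ) ≤ (gp : ℝ) := by exact_mod_cast h2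
    rcases le_abs.mp hx with hpos | hneg
    · -- x ≥ 1/2 : gm > x - 1/2^n ≥ 0
      have : (gm : ℝ) > x - 1 / 2 ^ n := by linarith
      linarith
    · -- x ≤ -1/2 : gp < x + 1/2^n ≤ 0
      have : (gp : ℝ) < x + 1 / 2 ^ n := by linarith
      linarith
  -- now build the computation sequence
  obtain ⟨k₁, hk₁, hck₁, u₁, hu₁, hag₁, _, hd₁⟩ := exists_pows (n + 1) hu₀
  have ha₁ : u₁ (c + 1) = (a : ℚ) := by rw [hag₁ (c+1) (le_refl _)]; exact ha₀
  set σ : ℚ := if 0 ≤ m' then 1 else -1 with hσ_def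
  clear_value σ
  have hσor : σ = 1 ∨ σ = -1 := by rw [hσ_def]; split_ifs <;> simp
  have hmlt : m'.natAbs < 2 ^ (n + 1) := by
    calc m'.natAbs ≤ P := hm'na
    _ < 2 ^ (n+1) := by rw [hP_def]; exact Nat.pow_lt_pow_right one_lt_two (by omega)
  obtain ⟨k₂, hk₂, hk₁k₂, u₂, hu₂, hag₂, i₂, hi₂, hv₂⟩ :=
    exists_dyadic (n + 1) m'.natAbs hmlt u₁ k₁ σ (a : ℚ) (c + 1) hu₁ hσor
      (by omega) ha₁ (fun l h1 hL => hd₁ l hL)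
  have hones : ones m'.natAbs ≤ n := ones_le_of_le_pow hn (by rw [← hP_def]; exact hm'na)
  have hv₂' : u₂ i₂ = (a : ℚ) + (m' : ℚ) / 2 ^ (n + 1) := by
    rw [hv₂]
    congr 1
    rcases le_or_gt 0 m' with h0 | h0
    · have h1 : ((m'.natAbs : ℚ)) = (m' : ℚ) := by
        rw [Nat.cast_natAbs, abs_of_nonneg h0]
      rw [hσ_def, if_pos h0, h1]; ring
    · have h1 : ((m'.natAbs : ℚ)) = -(m' : ℚ) := by
        rw [Nat.cast_natAbs, abs_of_neg h0]; push_cast; ring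
      rw [hσ_def, if_neg (not_le.mpr h0), h1]; ring
  -- the power (1/2)^n is still present in u₂
  obtain ⟨id, hid, hvd⟩ := hd₁ n (by omega)
  have hid₂ : id ≤ k₂ + 1 := by omega
  have hvd₂ : u₂ id = (1/2 : ℚ) ^ n := by rw [hag₂ id hid]; exact hvd
  -- key rational identity
  have hkey : ((M : ℚ) + 2) / 2 ^ (n + 1) = (M : ℚ) / 2 ^ (n + 1) + (1/2 : ℚ) ^ n := by
    rw [div_pow, one_pow]
    have h2 : (2:ℚ) ^ (n+1) ≠ 0 := by positivity
    field_simp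
    ring
  rcases hm'cases with hm'M | hm'M2
  · -- we built gm ; gp = gm + (1/2)^n
    have hv₂gm : u₂ i₂ = gm := by rw [hv₂', hm'M, hgm_def]
    obtain ⟨h₃, hag₃, hval₃⟩ := hu₂.snoc hi₂ hid₂ gp
      (Or.inl (by rw [hv₂gm, hvd₂, hgp_def, hgm_def, hkey]; ring))
    refine ⟨gm, gp, hgmx, hxgp, hsign, hgaple, k₂ + 1, by omega, _, h₃,
      ⟨i₂, by omega, by rw [hag₃ i₂ hi₂]; exact hv₂gm⟩,
      ⟨k₂ + 2, by omega, hval₃⟩⟩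
  · -- we built gp ; gm = gp - (1/2)^n
    have hv₂gp : u₂ i₂ = gp := by
      rw [hv₂', hm'M2, hgp_def]; push_cast; ring
    obtain ⟨h₃, hag₃, hval₃⟩ := hu₂.snoc hi₂ hid₂ gm
      (Or.inr (Or.inl (by rw [hv₂gp, hvd₂, hgp_def, hgm_def, hkey]; ring)))
    refine ⟨gm, gp, hgmx, hxgp, hsign, hgaple, k₂ + 1, by omega, _, h₃,
      ⟨k₂ + 2, by omega, hval₃⟩,
      ⟨i₂, by omega, by rw [hag₃ i₂ hi₂]; exact hv₂gp⟩⟩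
end

section
/- Cone–ball–cylinder inclusion: let x ≠ y in ℝ^d, let C(x,y,α) be the union of lines through x making angle at most α with the line through x and y, let D(x,y,r) be the set of points at distance at most r from the line aff{x,y}, and let B_r(y) be the closed ball of radius r around y. Then for every r ≥ ‖x−y‖ and α ∈ [0, π/4]: (i) C(x,y,α) ∩ B_r(y) ⊆ D(x,y, r·sin(2α)), and (ii) C(x,y,α) ∖ B_r(y) ⊆ C(y,x,2α). -/
open Real Metric

/-- The cone of revolution with apex `x` and axis the line through `x` and `y`:
points `z` such that the (acute) angle between the lines through `x, z` and
`x, y` is at most `α` (for `α ∈ [0, π/2]`), expressed via the inner product. -/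
def cone {d : ℕ} (x y : EuclideanSpace ℝ (Fin d)) (α : ℝ) :
    Set (EuclideanSpace ℝ (Fin d)) :=
  {z | ‖z - x‖ * ‖y - x‖ * Real.cos α ≤ |(inner ℝ (z - x) (y - x) : ℝ)|}

/-- The cylinder of revolution of radius `r` around the line through `x` and `y`. -/
noncomputable def cyl {d : ℕ} (x y : EuclideanSpace ℝ (Fin d)) (r : ℝ) :
    Set (EuclideanSpace ℝ (Fin d)) :=
  {z | Metric.infDist z (affineSpan ℝ {x, y} : Set (EuclideanSpace ℝ (Fin d))) ≤ r}

set_option maxHeartbeats 1000000 in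
private lemma coreA_aux (L r c sn T W : ℝ) (hW : 0 ≤ W) (hL : 0 < L) (hLr : L ≤ r)
    (hsn : 0 ≤ sn) (hsc : sn ≤ c) (hpy : c^2 + sn^2 = 1)
    (hcone : (T^2 + W^2) * c^2 ≤ T^2) (hball : (T - L)^2 + W^2 ≤ r^2) :
    W ≤ r * (2 * sn * c) := by
  have hr0 : 0 < r := lt_of_lt_of_le hL hLr
  have hc0 : 0 ≤ c := le_trans hsn hsc
  have hsn2 : sn^2 ≤ c^2 := by nlinarith
  have hTpy : T^2*c^2 + T^2*sn^2 = T^2 := by linear_combination T^2 * hpy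
  have h1 : W^2 * c^2 ≤ T^2 * sn^2 := by linarith
  have hcs : 0 ≤ c^2 - sn^2 := by linarith
  have hrpy : r*c^2 + r*sn^2 = r := by linear_combination r * hpy
  have hr2py : r^2*(c^2-sn^2)^2 = r^2 - 4*r^2*sn^2*c^2 := by
    linear_combination (r^2*(c^2+sn^2+1)) * hpy
  have key : W^2 ≤ 4 * r^2 * sn^2 * c^2 := by
    rcases eq_or_lt_of_le hsn with h0 | hsn'
    · subst h0
      have hc2 : c^2 = 1 := by linarith [hpy]
      rw [hc2] at hcone
      nlinarith [hcone]
    · by_contra h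
      push_neg at h
      have hc : 0 < c := lt_of_lt_of_le hsn' hsc
      have h2 : 4*r^2*sn^2*c^2*c^2 < W^2*c^2 :=
        mul_lt_mul_of_pos_right h (by positivity)
      have h3 : (4*r^2*c^4)*sn^2 < T^2*sn^2 := by nlinarith
      have hT : 4*r^2*c^4 < T^2 :=
        lt_of_mul_lt_mul_right (by linarith) (sq_nonneg sn)
      have hTL : (T - L)^2 < r^2 * (c^2 - sn^2)^2 := by linarith
      have hR : 0 ≤ r*(c^2 - sn^2) := mul_nonneg hr0.le hcs
      have hT1 : T - L < r*(c^2-sn^2) := by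
        by_contra hcon
        push_neg at hcon
        nlinarith [mul_le_mul hcon hcon hR (le_trans hR hcon)]
      have hT1' : T < 2*r*c^2 := by linarith
      have hT2 : T < -(2*r*c^2) := by
        by_contra hcon
        push_neg at hcon
        nlinarith [mul_nonneg (by linarith : (0:ℝ) ≤ 2*r*c^2 - T)
          (by linarith : (0:ℝ) ≤ 2*r*c^2 + T)]
      have hA : r*(c^2-sn^2) < -(T-L) := by linarith
      nlinarith [mul_pos (by linarith : (0:ℝ) < -(T-L) - r*(c^2-sn^2))
        (by linarith : (0:ℝ) < -(T-L) + r*(c^2-sn^2))]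
  have hR0 : 0 ≤ r * (2*sn*c) := by positivity
  have := Real.sqrt_le_sqrt key
  rwa [Real.sqrt_sq hW,
    show 4*r^2*sn^2*c^2 = (r*(2*sn*c))^2 by ring, Real.sqrt_sq hR0] at this

set_option maxHeartbeats 1000000 in
private lemma coreB_aux (L r c sn T W : ℝ) (hW : 0 ≤ W) (hL : 0 < L) (hLr : L ≤ r)
    (hsn : 0 ≤ sn) (hsc : sn ≤ c) (hpy : c^2 + sn^2 = 1)
    (hcone : (T^2 + W^2) * c^2 ≤ T^2) (hball : r^2 < (T - L)^2 + W^2) :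
    ((T - L)^2 + W^2) * (c^2 - sn^2)^2 ≤ (T - L)^2 := by
  have hr0 : 0 < r := lt_of_lt_of_le hL hLr
  have hc0 : 0 ≤ c := le_trans hsn hsc
  have hsn2 : sn^2 ≤ c^2 := by nlinarith
  have hcs : 0 ≤ c^2 - sn^2 := by linarith
  have hTpy : T^2*c^2 + T^2*sn^2 = T^2 := by linear_combination T^2 * hpy
  have h1 : W^2 * c^2 ≤ T^2 * sn^2 := by linarith
  have main : W^2 * (c^2 - sn^2)^2 ≤ 4 * sn^2 * c^2 * (T - L)^2 := by
    rcases le_or_gt T 0 with hT | hT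
    · have h4 : T^2 ≤ (T - L)^2 := by nlinarith
      have a1 : W^2*(c^2-sn^2)*(c^2-sn^2) ≤ W^2*(c^2-sn^2)*c^2 :=
        mul_le_mul_of_nonneg_left (by linarith [sq_nonneg sn]) (mul_nonneg (sq_nonneg W) hcs)
      have a2 : W^2*c^2*(c^2-sn^2) ≤ T^2*sn^2*(c^2-sn^2) :=
        mul_le_mul_of_nonneg_right h1 hcs
      have a3 : T^2*(sn^2*(c^2-sn^2)) ≤ (T-L)^2*(sn^2*(c^2-sn^2)) :=
        mul_le_mul_of_nonneg_right h4 (mul_nonneg (sq_nonneg sn) hcs)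
      have a4 : (T-L)^2*sn^2*(c^2-sn^2) ≤ (T-L)^2*sn^2*c^2 :=
        mul_le_mul_of_nonneg_left (by linarith [sq_nonneg sn])
          (mul_nonneg (sq_nonneg (T-L)) (sq_nonneg sn))
      nlinarith [a1, a2, a3, a4,
        mul_nonneg (mul_nonneg (sq_nonneg (T-L)) (sq_nonneg sn)) (sq_nonneg c)]
    · set ρ := Real.sqrt (T^2 + W^2) with hρdef
      have hρ0 : 0 ≤ ρ := Real.sqrt_nonneg _
      have hρ2 : ρ^2 = T^2 + W^2 := Real.sq_sqrt (by positivity)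
      have hρpos : 0 < ρ := by nlinarith [sq_nonneg W, mul_pos hT hT]
      have hρ2c : ρ^2*c^2 = (T^2+W^2)*c^2 := by rw [hρ2]
      have hρ2s : ρ^2*sn^2 = (T^2+W^2)*sn^2 := by rw [hρ2]
      have hρc : ρ * c ≤ T := by
        by_contra hcon
        push_neg at hcon
        have hbd : (0:ℝ) < ρ*c + T := by positivity
        nlinarith [mul_pos (by linarith : (0:ℝ) < ρ*c - T) hbd, hρ2c]
      have hWρ : W ≤ ρ * sn := by
        by_contra hcon
        push_neg at hcon
        have hsn0 : 0 ≤ ρ * sn := mul_nonneg hρ0 hsn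
        nlinarith [mul_pos (by linarith : (0:ℝ) < W - ρ*sn)
          (by linarith : (0:ℝ) < W + ρ*sn), hρ2s, hTpy]
      have hL2 : L^2 ≤ r^2 := by nlinarith
      have h2TL : 2*T*L < ρ^2 := by nlinarith
      have hρL : 2*c*L < ρ := by
        by_contra hcon
        push_neg at hcon
        nlinarith [mul_le_mul_of_nonneg_left hcon hρ0,
          mul_le_mul_of_nonneg_right hρc (by linarith : (0:ℝ) ≤ 2*L)]
      have hLpy : L*c^2 + L*sn^2 = L := by linear_combination L * hpy
      have hρpy : ρ*c^2 + ρ*sn^2 = ρ := by linear_combination ρ * hpy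
      have hc2L : 2*c*L*c ≤ ρ*c := mul_le_mul_of_nonneg_right hρL.le hc0
      have hTL0 : L*(c^2-sn^2) ≤ T - L := by nlinarith [hc2L, hρc, hLpy]
      have hkey : ρ*(c^2-sn^2) ≤ 2*c*(T-L) := by
        nlinarith [mul_le_mul_of_nonneg_left hρc (by linarith : (0:ℝ) ≤ 2*c), hρL, hρpy]
      have hTL0' : 0 ≤ T - L := le_trans (mul_nonneg hL.le hcs) hTL0
      have h5 : W * (c^2 - sn^2) ≤ 2*sn*c*(T-L) := by
        have b1 : W*(c^2-sn^2) ≤ (ρ*sn)*(c^2-sn^2) := mul_le_mul_of_nonneg_right hWρ hcs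
        have b2 : sn*(ρ*(c^2-sn^2)) ≤ sn*(2*c*(T-L)) := mul_le_mul_of_nonneg_left hkey hsn
        nlinarith [b1, b2]
      nlinarith [mul_self_le_mul_self (mul_nonneg hW hcs) h5]
  have hpy2 : (c^2-sn^2)^2 = 1 - 4*sn^2*c^2 := by linear_combination (c^2+sn^2+1) * hpy
  have hpy2T : (T-L)^2*(c^2-sn^2)^2 = (T-L)^2 - 4*sn^2*c^2*(T-L)^2 := by
    linear_combination (T-L)^2 * hpy2
  nlinarith [main, hpy2T]

private lemma setup_aux {d : ℕ} (x y z : EuclideanSpace ℝ (Fin d)) (hxy : x ≠ y) :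
    ∃ T W : ℝ, 0 ≤ W ∧
      ‖z - x‖^2 = T^2 + W^2 ∧
      ‖z - y‖^2 = (T - ‖y - x‖)^2 + W^2 ∧
      |(inner ℝ (z - x) (y - x) : ℝ)| = |T| * ‖y - x‖ ∧
      |(inner ℝ (z - y) (x - y) : ℝ)| = |T - ‖y - x‖| * ‖y - x‖ ∧
      Metric.infDist z (affineSpan ℝ {x, y} : Set (EuclideanSpace ℝ (Fin d))) ≤ W := by
  have hL : (0:ℝ) < ‖y - x‖ := by
    rw [norm_sub_pos_iff]; exact hxy.symm
  set L : ℝ := ‖y - x‖ with hLdef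
  set p : ℝ := (inner ℝ (z - x) (y - x) : ℝ) with hpdef
  set w : EuclideanSpace ℝ (Fin d) := z - x - (p / L^2) • (y - x) with hwdef
  have hLne : L ≠ 0 := ne_of_gt hL
  have hL2ne : L^2 ≠ 0 := pow_ne_zero 2 hLne
  have hwu : (inner ℝ w (y - x) : ℝ) = (0:ℝ) := by
    rw [hwdef, inner_sub_left, real_inner_smul_left, real_inner_self_eq_norm_sq,
      ← hpdef, ← hLdef, div_mul_cancel₀ p hL2ne, sub_self]
  have hzx : z - x = w + (p / L^2) • (y - x) := by rw [hwdef]; abel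
  have hsmul : ∀ s : ℝ, ‖w + s • (y - x)‖^2 = ‖w‖^2 + s^2 * L^2 := by
    intro s
    rw [norm_add_sq_real, real_inner_smul_right, hwu, norm_smul, ← hLdef,
      Real.norm_eq_abs, mul_pow, sq_abs]
    ring
  refine ⟨p / L, ‖w‖, norm_nonneg _, ?_, ?_, ?_, ?_, ?_⟩
  · rw [hzx, hsmul]
    rw [div_pow, div_pow, sq, sq, sq]
    field_simp
    ring
  · have hzy : z - y = w + (p / L^2 - 1) • (y - x) := by
      rw [hwdef, sub_smul, one_smul]; abel
    rw [hzy, hsmul]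
    have : (p / L^2 - 1)^2 * L^2 = (p / L - L)^2 := by
      field_simp
    rw [this]
    ring
  · rw [abs_div, abs_of_pos hL, div_mul_cancel₀ _ hLne]
  · have h1 : (inner ℝ (z - y) (x - y) : ℝ) = L^2 - p := by
      rw [show z - y = (z - x) - (y - x) by abel, show x - y = -(y - x) by abel,
        inner_neg_right, inner_sub_left, real_inner_self_eq_norm_sq, ← hpdef, ← hLdef]
      ring
    rw [h1]
    have h2 : L^2 - p = -((p / L - L) * L) := by
      field_simp
      ring
    rw [h2, abs_neg, abs_mul, abs_of_pos hL]
  · have hq : ((p / L^2) • (y -ᵥ x) +ᵥ x : EuclideanSpace ℝ (Fin d)) ∈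
        (affineSpan ℝ {x, y} : Set (EuclideanSpace ℝ (Fin d))) :=
      smul_vsub_vadd_mem_affineSpan_pair (p / L^2) x y
    refine le_trans (Metric.infDist_le_dist_of_mem hq) ?_
    rw [dist_eq_norm]
    have : z - ((p / L^2) • (y -ᵥ x) +ᵥ x) = w := by
      rw [hwdef, vsub_eq_sub, vadd_eq_add]; abel
    rw [this]

set_option maxHeartbeats 1000000 in
/-- cone–ball–cylinder inclusion. -/
theorem cone_ball_cylinder_inclusion {d : ℕ} (x y : EuclideanSpace ℝ (Fin d))
    (hxy : x ≠ y) (r : ℝ) (hr : ‖x - y‖ ≤ r) (α : ℝ) (hα0 : 0 ≤ α) (hα : α ≤ π / 4) :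
    cone x y α ∩ closedBall y r ⊆ cyl x y (r * Real.sin (2 * α)) ∧
    cone x y α \ closedBall y r ⊆ cone y x (2 * α) := by
  have hpi := Real.pi_pos
  have hL : (0:ℝ) < ‖y - x‖ := by rw [norm_sub_pos_iff]; exact hxy.symm
  have hLr : ‖y - x‖ ≤ r := by rw [norm_sub_rev]; exact hr
  have hc0 : 0 ≤ Real.cos α :=
    Real.cos_nonneg_of_mem_Icc ⟨by linarith, by linarith⟩
  have hs0 : 0 ≤ Real.sin α :=
    Real.sin_nonneg_of_nonneg_of_le_pi hα0 (by linarith)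
  have hsc : Real.sin α ≤ Real.cos α := by
    rw [← Real.sin_pi_div_two_sub]
    exact Real.strictMonoOn_sin.monotoneOn ⟨by linarith, by linarith⟩
      ⟨by linarith, by linarith⟩ (by linarith)
  have hpy : Real.cos α^2 + Real.sin α^2 = 1 := by
    rw [add_comm]; exact Real.sin_sq_add_cos_sq α
  constructor
  · rintro z ⟨hzc, hzb⟩
    obtain ⟨T, W, hW, h1, h2, h3, h4, h5⟩ := setup_aux x y z hxy
    have hzc' : ‖z - x‖ * ‖y - x‖ * Real.cos α ≤ |T| * ‖y - x‖ := h3 ▸ hzc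
    have hA : ‖z - x‖ * Real.cos α ≤ |T| := by nlinarith [hL, hzc']
    have hsq := mul_self_le_mul_self (by positivity : 0 ≤ ‖z - x‖ * Real.cos α) hA
    have habs : |T| * |T| = T^2 := by rw [abs_mul_abs_self]; ring
    have h1c : ‖z - x‖^2 * Real.cos α^2 = (T^2 + W^2) * Real.cos α^2 := by rw [h1]
    have hcone : (T^2 + W^2) * Real.cos α^2 ≤ T^2 := by nlinarith [hsq, habs, h1c]
    have hdzy : ‖z - y‖ ≤ r := by
      rw [← dist_eq_norm]; exact mem_closedBall.mp hzb
    have hball : (T - ‖y - x‖)^2 + W^2 ≤ r^2 := by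
      have := pow_le_pow_left₀ (norm_nonneg (z - y)) hdzy 2
      linarith [h2 ▸ this]
    have hcA := coreA_aux (‖y - x‖) r (Real.cos α) (Real.sin α) T W hW hL hLr hs0 hsc
      hpy hcone hball
    show Metric.infDist z (affineSpan ℝ {x, y} : Set (EuclideanSpace ℝ (Fin d)))
        ≤ r * Real.sin (2 * α)
    rw [Real.sin_two_mul]
    linarith [h5, hcA]
  · rintro z ⟨hzc, hzb⟩
    obtain ⟨T, W, hW, h1, h2, h3, h4, h5⟩ := setup_aux x y z hxy
    have hzc' : ‖z - x‖ * ‖y - x‖ * Real.cos α ≤ |T| * ‖y - x‖ := h3 ▸ hzc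
    have hA : ‖z - x‖ * Real.cos α ≤ |T| := by nlinarith [hL, hzc']
    have hsq := mul_self_le_mul_self (by positivity : 0 ≤ ‖z - x‖ * Real.cos α) hA
    have habs : |T| * |T| = T^2 := by rw [abs_mul_abs_self]; ring
    have h1c : ‖z - x‖^2 * Real.cos α^2 = (T^2 + W^2) * Real.cos α^2 := by rw [h1]
    have hcone : (T^2 + W^2) * Real.cos α^2 ≤ T^2 := by nlinarith [hsq, habs, h1c]
    have hdzy : r < ‖z - y‖ := by
      have := hzb
      rw [Metric.mem_closedBall, not_le, dist_eq_norm] at this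
      exact this
    have hball : r^2 < (T - ‖y - x‖)^2 + W^2 := by
      have hr0 : (0:ℝ) ≤ r := le_trans hL.le hLr
      have := pow_lt_pow_left₀ hdzy hr0 (two_ne_zero)
      linarith [h2 ▸ this]
    have hcB := coreB_aux (‖y - x‖) r (Real.cos α) (Real.sin α) T W hW hL hLr hs0 hsc
      hpy hcone hball
    have hc2 : Real.cos (2 * α) = Real.cos α^2 - Real.sin α^2 := by
      rw [Real.cos_two_mul]; linarith [hpy]
    have hc2nn : 0 ≤ Real.cos (2 * α) :=
      Real.cos_nonneg_of_mem_Icc ⟨by linarith, by linarith⟩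
    have hsq2 : (‖z - y‖ * Real.cos (2 * α))^2 ≤ |T - ‖y - x‖|^2 := by
      rw [mul_pow, h2, hc2, sq_abs]
      exact hcB
    have hfin : ‖z - y‖ * Real.cos (2 * α) ≤ |T - ‖y - x‖| := by
      have h := Real.sqrt_le_sqrt hsq2
      rwa [Real.sqrt_sq (mul_nonneg (norm_nonneg _) hc2nn),
        Real.sqrt_sq (abs_nonneg _)] at h
    simp only [cone, Set.mem_setOf_eq]
    rw [h4, norm_sub_rev x y]
    nlinarith [mul_le_mul_of_nonneg_right hfin hL.le]
end

section
/- Wedge monotonicity for rotated halfspaces: let S = (s_1,…,s_{d−1}) be points in ℝ^d and p, q ∈ ℝ^d such that {s_1,…,s_{d−1},p,q} is affinely independent. Define H⁺_{S,x} = {z : det([s_1,…,s_{d−1},x,z] augmented with ones) > 0} and H⁻_{S,x} likewise with < 0, and H⁺_{S,p}(ε) = ∪_{p' ∈ H⁻_{S,p} ∩ B_ε(p)} H⁺_{S,p'}. If q ∉ H⁺_{S,p}(ε), then H⁺_{S,p}(ε) ∩ H⁻_{S,p} ⊆ H⁺_{S,q}. -/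
/-- Determinant of `n+1` points of `ℝ^n` (columns) augmented by a row of ones. -/
noncomputable def det1 {n : ℕ} (p : Fin (n + 1) → EuclideanSpace ℝ (Fin n)) : ℝ :=
  Matrix.det (Matrix.of fun i j : Fin (n + 1) =>
    if h : (i : ℕ) < n then p j ⟨(i : ℕ), h⟩ else 1)

/-- The open halfspace `H⁺_{S,x}` bounded by the hyperplane through `s₁,…,s_d, x`. -/
def Hp {d : ℕ} (S : Fin d → EuclideanSpace ℝ (Fin (d + 1)))
    (x : EuclideanSpace ℝ (Fin (d + 1))) : Set (EuclideanSpace ℝ (Fin (d + 1))) :=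
  {z | 0 < det1 (Fin.snoc (Fin.snoc S x) z)}

/-- The open halfspace `H⁻_{S,x}`. -/
def Hm {d : ℕ} (S : Fin d → EuclideanSpace ℝ (Fin (d + 1)))
    (x : EuclideanSpace ℝ (Fin (d + 1))) : Set (EuclideanSpace ℝ (Fin (d + 1))) :=
  {z | det1 (Fin.snoc (Fin.snoc S x) z) < 0}

/-- `H⁺_{S,p}(ε) = ⋃_{p' ∈ H⁻_{S,p} ∩ B_ε(p)} H⁺_{S,p'}`. -/
def HpEps {d : ℕ} (S : Fin d → EuclideanSpace ℝ (Fin (d + 1)))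
    (p : EuclideanSpace ℝ (Fin (d + 1))) (ε : ℝ) :
    Set (EuclideanSpace ℝ (Fin (d + 1))) :=
  ⋃ p' ∈ Hm S p ∩ Metric.closedBall p ε, Hp S p'

namespace WedgeAux

variable {d : ℕ}

/-- homogeneous lift of a point of `ℝ^{d+1}` to `ℝ^{d+2}` with last coord 1 -/
def lift (x : EuclideanSpace ℝ (Fin (d + 1))) : Fin (d + 2) → ℝ :=
  fun i => if h : (i : ℕ) < d + 1 then x ⟨(i : ℕ), h⟩ else 1

/-- the bracket `[c a b]` -/
noncomputable def Dd (c : Fin d → Fin (d + 2) → ℝ) (a b : Fin (d + 2) → ℝ) : ℝ :=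
  (Matrix.of (Fin.snoc (Fin.snoc c a) b)).det

lemma det1_eq (S : Fin d → EuclideanSpace ℝ (Fin (d + 1)))
    (x z : EuclideanSpace ℝ (Fin (d + 1))) :
    det1 (Fin.snoc (Fin.snoc S x) z)
      = Dd (fun j => lift (S j)) (lift x) (lift z) := by
  have h2 : (fun j => lift ((Fin.snoc S x : Fin (d + 1) → EuclideanSpace ℝ (Fin (d + 1))) j))
      = (Fin.snoc (fun j => lift (S j)) (lift x) : Fin (d + 1) → Fin (d + 2) → ℝ) := by
    funext j
    refine Fin.lastCases ?_ (fun k => ?_) j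
    · rw [Fin.snoc_last, Fin.snoc_last]
    · rw [Fin.snoc_castSucc, Fin.snoc_castSucc]
  have hcomp : (fun j => lift ((Fin.snoc (Fin.snoc S x) z :
        Fin (d + 2) → EuclideanSpace ℝ (Fin (d + 1))) j))
      = (Fin.snoc (Fin.snoc (fun j => lift (S j)) (lift x)) (lift z) :
        Fin (d + 2) → Fin (d + 2) → ℝ) := by
    funext j
    refine Fin.lastCases ?_ (fun k => ?_) j
    · rw [Fin.snoc_last, Fin.snoc_last]
    · rw [Fin.snoc_castSucc, Fin.snoc_castSucc, ← h2]
  have hmat : (Matrix.of fun i j : Fin (d + 2) =>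
        if h : (i : ℕ) < d + 1 then (Fin.snoc (Fin.snoc S x) z :
          Fin (d + 2) → EuclideanSpace ℝ (Fin (d + 1))) j ⟨(i : ℕ), h⟩ else 1)
      = Matrix.transpose (Matrix.of (Fin.snoc (Fin.snoc (fun j => lift (S j)) (lift x)) (lift z) :
          Fin (d + 2) → Fin (d + 2) → ℝ)) := by
    ext i j
    simp only [Matrix.transpose_apply, Matrix.of_apply]
    exact congrFun (congrFun hcomp j) i
  unfold det1 Dd
  rw [hmat, Matrix.det_transpose]

lemma snoc_right_update (c : Fin d → Fin (d + 2) → ℝ) (a w : Fin (d + 2) → ℝ) :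
    (Fin.snoc (Fin.snoc c a) w : Fin (d + 2) → Fin (d + 2) → ℝ)
      = Function.update (Fin.snoc (Fin.snoc c a) 0 : Fin (d + 2) → Fin (d + 2) → ℝ)
        (Fin.last (d + 1)) w :=
  (Fin.update_snoc_last _ _ _).symm

lemma snoc_left_update (c : Fin d → Fin (d + 2) → ℝ) (a b : Fin (d + 2) → ℝ) :
    (Fin.snoc (Fin.snoc c a) b : Fin (d + 2) → Fin (d + 2) → ℝ)
      = Function.update (Fin.snoc (Fin.snoc c 0) b : Fin (d + 2) → Fin (d + 2) → ℝ)
        ((Fin.last d).castSucc) a := by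
  rw [← Fin.snoc_update, Fin.update_snoc_last]

lemma Dd_add_right (c : Fin d → Fin (d + 2) → ℝ) (a u v : Fin (d + 2) → ℝ) :
    Dd c a (u + v) = Dd c a u + Dd c a v := by
  unfold Dd
  rw [snoc_right_update c a (u + v), snoc_right_update c a u, snoc_right_update c a v]
  exact Matrix.det_updateRow_add _ _ _ _

lemma Dd_smul_right (c : Fin d → Fin (d + 2) → ℝ) (r : ℝ) (a u : Fin (d + 2) → ℝ) :
    Dd c a (r • u) = r * Dd c a u := by
  unfold Dd
  rw [snoc_right_update c a (r • u), snoc_right_update c a u]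
  exact Matrix.det_updateRow_smul _ _ _ _

lemma Dd_add_left (c : Fin d → Fin (d + 2) → ℝ) (a u v : Fin (d + 2) → ℝ) :
    Dd c (u + v) a = Dd c u a + Dd c v a := by
  unfold Dd
  rw [snoc_left_update c (u + v) a, snoc_left_update c u a, snoc_left_update c v a]
  exact Matrix.det_updateRow_add _ _ _ _

lemma Dd_smul_left (c : Fin d → Fin (d + 2) → ℝ) (r : ℝ) (a u : Fin (d + 2) → ℝ) :
    Dd c (r • u) a = r * Dd c u a := by
  unfold Dd
  rw [snoc_left_update c (r • u) a, snoc_left_update c u a]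
  exact Matrix.det_updateRow_smul _ _ _ _

lemma Dd_sub_right (c : Fin d → Fin (d + 2) → ℝ) (a u v : Fin (d + 2) → ℝ) :
    Dd c a (u - v) = Dd c a u - Dd c a v := by
  have h : u - v = u + (-1 : ℝ) • v := by simp [sub_eq_add_neg]
  rw [h, Dd_add_right, Dd_smul_right]; ring

lemma Dd_sub_left (c : Fin d → Fin (d + 2) → ℝ) (a u v : Fin (d + 2) → ℝ) :
    Dd c (u - v) a = Dd c u a - Dd c v a := by
  have h : u - v = u + (-1 : ℝ) • v := by simp [sub_eq_add_neg]
  rw [h, Dd_add_left, Dd_smul_left]; ring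

lemma Dd_self (c : Fin d → Fin (d + 2) → ℝ) (a : Fin (d + 2) → ℝ) :
    Dd c a a = 0 := by
  apply Matrix.det_zero_of_row_eq (i := (Fin.last d).castSucc) (j := Fin.last (d + 1))
  · intro hEq
    have h0 := congrArg Fin.val hEq
    simp only [Fin.coe_castSucc, Fin.val_last] at h0
    omega
  · have e1 : (Fin.snoc (Fin.snoc c a) a : Fin (d + 2) → Fin (d + 2) → ℝ)
        ((Fin.last d).castSucc) = a := by rw [Fin.snoc_castSucc, Fin.snoc_last]
    have e2 : (Fin.snoc (Fin.snoc c a) a : Fin (d + 2) → Fin (d + 2) → ℝ)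
        (Fin.last (d + 1)) = a := by rw [Fin.snoc_last]
    show (Fin.snoc (Fin.snoc c a) a : Fin (d + 2) → Fin (d + 2) → ℝ) ((Fin.last d).castSucc)
        = (Fin.snoc (Fin.snoc c a) a : Fin (d + 2) → Fin (d + 2) → ℝ) (Fin.last (d + 1))
    rw [e1, e2]

lemma Dd_swap (c : Fin d → Fin (d + 2) → ℝ) (a b : Fin (d + 2) → ℝ) :
    Dd c a b = - Dd c b a := by
  have h := Dd_self c (a + b)
  rw [Dd_add_left, Dd_add_right, Dd_add_right, Dd_self, Dd_self] at h
  linarith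

lemma Dd_row (c : Fin d → Fin (d + 2) → ℝ) (a : Fin (d + 2) → ℝ) (i : Fin d) :
    Dd c a (c i) = 0 := by
  apply Matrix.det_zero_of_row_eq (i := i.castSucc.castSucc) (j := Fin.last (d + 1))
  · intro hEq
    have h0 := congrArg Fin.val hEq
    simp only [Fin.coe_castSucc, Fin.val_last] at h0
    omega
  · have e1 : (Fin.snoc (Fin.snoc c a) (c i) : Fin (d + 2) → Fin (d + 2) → ℝ)
        (i.castSucc.castSucc) = c i := by rw [Fin.snoc_castSucc, Fin.snoc_castSucc]
    have e2 : (Fin.snoc (Fin.snoc c a) (c i) : Fin (d + 2) → Fin (d + 2) → ℝ)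
        (Fin.last (d + 1)) = c i := by rw [Fin.snoc_last]
    show (Fin.snoc (Fin.snoc c a) (c i) : Fin (d + 2) → Fin (d + 2) → ℝ) (i.castSucc.castSucc)
        = (Fin.snoc (Fin.snoc c a) (c i) : Fin (d + 2) → Fin (d + 2) → ℝ) (Fin.last (d + 1))
    rw [e1, e2]

lemma Dd_zero_right (c : Fin d → Fin (d + 2) → ℝ) (a : Fin (d + 2) → ℝ) :
    Dd c a 0 = 0 := by
  have h : (0 : Fin (d + 2) → ℝ) = (0 : ℝ) • (0 : Fin (d + 2) → ℝ) := by simp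
  rw [h, Dd_smul_right]; ring

lemma det_zero_of_rows_mem {r : Fin (d + 2) → Fin (d + 2) → ℝ}
    {W : Submodule ℝ (Fin (d + 2) → ℝ)} (hW : W ≠ ⊤) (hr : ∀ j, r j ∈ W) :
    (Matrix.of r).det = 0 := by
  by_contra h
  have hu : IsUnit (Matrix.of r) :=
    (Matrix.isUnit_iff_isUnit_det _).2 (isUnit_iff_ne_zero.2 h)
  have hli : LinearIndependent ℝ r := Matrix.linearIndependent_rows_iff_isUnit.2 hu
  have hspan : Submodule.span ℝ (Set.range r) = ⊤ :=
    hli.span_eq_top_of_card_eq_finrank (by simp)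
  apply hW
  rw [← top_le_iff, ← hspan]
  exact Submodule.span_le.2 (Set.range_subset_iff.2 hr)

lemma Dd_zero_of_mem {c : Fin d → Fin (d + 2) → ℝ} {W : Submodule ℝ (Fin (d + 2) → ℝ)}
    (hW : W ≠ ⊤) (hc : ∀ i, c i ∈ W) {a b : Fin (d + 2) → ℝ}
    (ha : a ∈ W) (hb : b ∈ W) : Dd c a b = 0 := by
  apply det_zero_of_rows_mem hW
  intro j
  refine Fin.lastCases ?_ (fun k => ?_) j
  · rw [Fin.snoc_last]; exact hb
  · rw [Fin.snoc_castSucc]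
    refine Fin.lastCases ?_ (fun k' => ?_) k
    · rw [Fin.snoc_last]; exact ha
    · rw [Fin.snoc_castSucc]; exact hc k'

/-- Grassmann–Plücker three-term relation. -/
lemma pluecker (c : Fin d → Fin (d + 2) → ℝ) (a b c' e : Fin (d + 2) → ℝ) :
    Dd c a b * Dd c c' e - Dd c a c' * Dd c b e + Dd c a e * Dd c b c' = 0 := by
  have hcW : ∀ i, c i ∈ Submodule.span ℝ (Set.range c ∪ {a, b, c'}) := fun i =>
    Submodule.subset_span (Set.mem_union_left _ ⟨i, rfl⟩)
  have haW : a ∈ Submodule.span ℝ (Set.range c ∪ {a, b, c'}) :=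
    Submodule.subset_span (Set.mem_union_right _ (by simp))
  have hbW : b ∈ Submodule.span ℝ (Set.range c ∪ {a, b, c'}) :=
    Submodule.subset_span (Set.mem_union_right _ (by simp))
  have hcW' : c' ∈ Submodule.span ℝ (Set.range c ∪ {a, b, c'}) :=
    Submodule.subset_span (Set.mem_union_right _ (by simp))
  by_cases hW : Submodule.span ℝ (Set.range c ∪ {a, b, c'}) = ⊤
  · have he : e ∈ Submodule.span ℝ (Set.range c ∪ {a, b, c'}) := hW ▸ Submodule.mem_top
    induction he using Submodule.span_induction with
    | mem x hx =>
      rcases hx with ⟨i, rfl⟩ | hx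
      · rw [Dd_row, Dd_row, Dd_row]; ring
      · simp only [Set.mem_insert_iff, Set.mem_singleton_iff] at hx
        rcases hx with h | h | h
        · rw [h, Dd_self, Dd_swap c c' a, Dd_swap c b a]; ring
        · rw [h, Dd_self, Dd_swap c c' b]; ring
        · rw [h, Dd_self, Dd_swap c b c']; ring
    | zero => rw [Dd_zero_right, Dd_zero_right, Dd_zero_right]; ring
    | add x y hx hy ihx ihy =>
      rw [Dd_add_right, Dd_add_right, Dd_add_right]
      linear_combination ihx + ihy
    | smul r x hx ihx =>
      rw [Dd_smul_right, Dd_smul_right, Dd_smul_right]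
      linear_combination r * ihx
  · rw [Dd_zero_of_mem hW hcW haW hbW, Dd_zero_of_mem hW hcW haW hcW',
      Dd_zero_of_mem hW hcW hbW hcW']
    ring

lemma lift_castSucc (x : EuclideanSpace ℝ (Fin (d + 1))) (k : Fin (d + 1)) :
    lift x k.castSucc = x k := by
  have hk : ((k.castSucc : Fin (d + 2)) : ℕ) < d + 1 := by have := k.isLt; simp; omega
  simp only [lift, dif_pos hk]
  exact congrArg x (Fin.ext (by simp))

lemma lift_last (x : EuclideanSpace ℝ (Fin (d + 1))) : lift x (Fin.last (d + 1)) = 1 := by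
  simp [lift]

lemma lift_line (x y : EuclideanSpace ℝ (Fin (d + 1))) (t : ℝ) :
    lift (x + t • (y - x)) = lift x + t • (lift y - lift x) := by
  funext i
  by_cases h : (i : ℕ) < d + 1
  · simp only [lift, dif_pos h, Pi.add_apply, Pi.smul_apply, Pi.sub_apply, smul_eq_mul]
    have h1 : (x + t • (y - x)) ⟨(i : ℕ), h⟩
        = x ⟨(i : ℕ), h⟩ + t * (y ⟨(i : ℕ), h⟩ - x ⟨(i : ℕ), h⟩) := by
      simp [PiLp.add_apply, PiLp.smul_apply, PiLp.sub_apply]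
    rw [h1]
  · simp only [lift, dif_neg h, Pi.add_apply, Pi.smul_apply, Pi.sub_apply, smul_eq_mul]
    ring

lemma Dd_ne_zero (S : Fin d → EuclideanSpace ℝ (Fin (d + 1)))
    (p q : EuclideanSpace ℝ (Fin (d + 1)))
    (h : AffineIndependent ℝ (Fin.snoc (Fin.snoc S p) q)) :
    Dd (fun j => lift (S j)) (lift p) (lift q) ≠ 0 := by
  set pts : Fin (d + 2) → EuclideanSpace ℝ (Fin (d + 1)) := Fin.snoc (Fin.snoc S p) q with hpts
  have hrows : (Fin.snoc (Fin.snoc (fun j => lift (S j)) (lift p)) (lift q) :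
      Fin (d + 2) → Fin (d + 2) → ℝ) = fun j => lift (pts j) := by
    funext j
    refine Fin.lastCases ?_ (fun k => ?_) j
    · rw [Fin.snoc_last, hpts, Fin.snoc_last]
    · rw [Fin.snoc_castSucc]
      have h2 : pts k.castSucc = (Fin.snoc S p : Fin (d + 1) → _) k := by
        rw [hpts, Fin.snoc_castSucc]
      rw [h2]
      refine Fin.lastCases ?_ (fun k' => ?_) k
      · rw [Fin.snoc_last, Fin.snoc_last]
      · rw [Fin.snoc_castSucc, Fin.snoc_castSucc]
  have hli : LinearIndependent ℝ (fun j => lift (pts j)) := by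
    rw [Fintype.linearIndependent_iff]
    intro g hg
    have happ : ∀ k : Fin (d + 2), ∑ i, g i * lift (pts i) k = 0 := by
      intro k
      have h3 := congrFun hg k
      simpa [Finset.sum_apply] using h3
    have hsum1 : ∑ i, g i = 0 := by
      have h4 := happ (Fin.last (d + 1))
      simpa [lift_last] using h4
    have hsum2 : ∑ i, g i • pts i = 0 := by
      apply PiLp.ext
      intro k
      have h5 := happ k.castSucc
      simp only [lift_castSucc] at h5
      show EuclideanSpace.projₗ (𝕜 := ℝ) k (∑ i, g i • pts i) = 0
      rw [map_sum]
      simp only [map_smul, smul_eq_mul]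
      exact h5
    intro i
    exact affineIndependent_iff.1 h Finset.univ g hsum1 hsum2 i (Finset.mem_univ i)
  rw [← hrows] at hli
  intro hzero
  have hu : IsUnit (Dd (fun j => lift (S j)) (lift p) (lift q)) := by
    have hU : IsUnit (Matrix.of (Fin.snoc (Fin.snoc (fun j => lift (S j)) (lift p)) (lift q) :
        Fin (d + 2) → Fin (d + 2) → ℝ)) := Matrix.linearIndependent_rows_iff_isUnit.1 hli
    exact (Matrix.isUnit_iff_isUnit_det _).1 hU
  rw [hzero] at hu
  exact hu.ne_zero rfl

end WedgeAux

open WedgeAux in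
/-- wedge monotonicity for rotated halfspaces (in `ℝ^{d+1}`, with
`S` a list of `d` points). -/
theorem wedge_monotonicity {d : ℕ} (S : Fin d → EuclideanSpace ℝ (Fin (d + 1)))
    (p q : EuclideanSpace ℝ (Fin (d + 1))) (ε : ℝ) (hε : 0 < ε)
    (hindep : AffineIndependent ℝ (Fin.snoc (Fin.snoc S p) q))
    (hq : q ∉ HpEps S p ε) :
    HpEps S p ε ∩ Hm S p ⊆ Hp S q := by
  set c : Fin d → Fin (d + 2) → ℝ := fun j => lift (S j) with hc
  have hq' : ∀ p'', p'' ∈ Hm S p → p'' ∈ Metric.closedBall p ε →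
      Dd c (lift p'') (lift q) ≤ 0 := by
    intro p'' h1 h2
    by_contra h3
    push_neg at h3
    refine hq (Set.mem_iUnion₂.mpr ⟨p'', ⟨h1, h2⟩, ?_⟩)
    show 0 < det1 (Fin.snoc (Fin.snoc S p'') q)
    rw [det1_eq]
    exact h3
  intro z hz
  obtain ⟨hz1, hz2⟩ := hz
  obtain ⟨p', hp', hzp'⟩ := Set.mem_iUnion₂.mp hz1
  have hpp' : Dd c (lift p) (lift p') < 0 := by
    have h0 : det1 (Fin.snoc (Fin.snoc S p) p') < 0 := hp'.1
    rw [det1_eq] at h0; exact h0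
  have hp'z : 0 < Dd c (lift p') (lift z) := by
    have h0 : 0 < det1 (Fin.snoc (Fin.snoc S p') z) := hzp'
    rw [det1_eq] at h0; exact h0
  have hpz : Dd c (lift p) (lift z) < 0 := by
    have h0 : det1 (Fin.snoc (Fin.snoc S p) z) < 0 := hz2
    rw [det1_eq] at h0; exact h0
  have hp'q : Dd c (lift p') (lift q) ≤ 0 := hq' p' hp'.1 hp'.2
  have hpq_ne : Dd c (lift p) (lift q) ≠ 0 := Dd_ne_zero S p q hindep
  have hpq_le : Dd c (lift p) (lift q) ≤ 0 := by
    by_contra hA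
    push_neg at hA
    set A := Dd c (lift p) (lift q) with hAdef
    set B := Dd c (lift p') (lift q) with hBdef
    have hAB : 0 < A - B := by linarith
    have hABne : A - B ≠ 0 := ne_of_gt hAB
    set t : ℝ := A / (2 * (A - B)) with ht
    have ht0 : 0 < t := by positivity
    have ht1 : t ≤ 1 / 2 := by
      rw [ht, div_le_div_iff₀ (by positivity) (by norm_num)]
      nlinarith
    set pt : EuclideanSpace ℝ (Fin (d + 1)) := p + t • (p' - p) with hptdef
    have hliftpt : lift pt = lift p + t • (lift p' - lift p) := lift_line p p' t
    have hDleft : ∀ w : Fin (d + 2) → ℝ,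
        Dd c (lift pt) w = Dd c (lift p) w + t * (Dd c (lift p') w - Dd c (lift p) w) := by
      intro w
      rw [hliftpt, Dd_add_left, Dd_smul_left, Dd_sub_left]
    have hDright : Dd c (lift p) (lift pt)
        = Dd c (lift p) (lift p) + t * (Dd c (lift p) (lift p') - Dd c (lift p) (lift p)) := by
      rw [hliftpt, Dd_add_right, Dd_smul_right, Dd_sub_right]
    have hptHm : pt ∈ Hm S p := by
      show det1 (Fin.snoc (Fin.snoc S p) pt) < 0
      rw [det1_eq, hDright, Dd_self]
      have h6 : t * Dd c (lift p) (lift p') < 0 := mul_neg_of_pos_of_neg ht0 hpp'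
      nlinarith
    have hptBall : pt ∈ Metric.closedBall p ε := by
      rw [Metric.mem_closedBall, dist_eq_norm]
      have h7 : pt - p = t • (p' - p) := by rw [hptdef]; abel
      rw [h7, norm_smul, Real.norm_eq_abs, abs_of_pos ht0]
      have hn : ‖p' - p‖ ≤ ε := by
        have h8 := hp'.2
        rw [Metric.mem_closedBall, dist_eq_norm] at h8
        exact h8
      have h9 : t * ‖p' - p‖ ≤ t * ε := mul_le_mul_of_nonneg_left hn ht0.le
      have h10 : 0 ≤ (1 - t) * ε := mul_nonneg (by linarith) hε.le
      nlinarith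
    have h11 := hq' pt hptHm hptBall
    rw [hDleft (lift q)] at h11
    have hkey : t * (B - A) = -(A / 2) := by
      rw [ht]
      field_simp
      ring
    linarith
  have hpq : Dd c (lift p) (lift q) < 0 := lt_of_le_of_ne hpq_le hpq_ne
  show 0 < det1 (Fin.snoc (Fin.snoc S q) z)
  rw [det1_eq]
  by_contra hQZ
  push_neg at hQZ
  have hpl := pluecker c (lift p) (lift p') (lift q) (lift z)
  nlinarith [mul_nonneg (neg_nonneg.2 hpp'.le) (neg_nonneg.2 hQZ),
    mul_neg_of_neg_of_pos hpq hp'z,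
    mul_nonneg (neg_nonneg.2 hpz.le) (neg_nonneg.2 hp'q)]
end

section
/- Reduction to corank-1 subconfigurations: let d ≥ 2, X a finite set with |X| ≥ d+2, and P, Q ∈ (ℝ^d)^X full-dimensional configurations that are not directly affinely equivalent. Then there exists Y ⊆ X with |Y| = d+2 such that the restriction P_{|Y} has corank 1 (i.e., aff(P_{|Y}) = ℝ^d) and P_{|Y} is not directly affinely equivalent to Q_{|Y}. -/
/-- Two labeled configurations are directly affinely equivalent (on a set of labels)
if an invertible affine map with orientation-preserving linear part carries one to
the other. -/
def DirectlyAffEquivOn {d : ℕ} {X : Type} (P Q : X → Fin d → ℝ) (Y : Set X) : Prop :=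
  ∃ φ : (Fin d → ℝ) ≃ᵃ[ℝ] (Fin d → ℝ),
    0 < LinearMap.det (φ.linear : (Fin d → ℝ) →ₗ[ℝ] (Fin d → ℝ)) ∧
    ∀ i ∈ Y, Q i = φ (P i)

/-- Two affine maps agreeing on an affinely spanning set are equal. -/
lemma affineMap_eq_of_eqOn_span {d : ℕ} {f g : (Fin d → ℝ) →ᵃ[ℝ] (Fin d → ℝ)}
    {s : Set (Fin d → ℝ)} (hs : affineSpan ℝ s = ⊤) (h : ∀ x ∈ s, f x = g x) :
    f = g := by
  refine AffineMap.ext fun x => ?_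
  have hx : x ∈ affineSpan ℝ s := by rw [hs]; exact AffineSubspace.mem_top ℝ _ x
  refine affineSpan_induction (p := fun y => f y = g y) hx h ?_
  intro c u v w hu hv hw
  rw [AffineMap.map_vadd, AffineMap.map_vadd, map_smul, map_smul,
    AffineMap.linearMap_vsub, AffineMap.linearMap_vsub, hu, hv, hw]

/-- Existence of a spanning subconfiguration of `d + 1` points. -/
lemma exists_spanning_finset {d : ℕ} {X : Type} [Fintype X] (P : X → Fin d → ℝ)
    (hPfull : affineSpan ℝ (Set.range P) = ⊤) :
    ∃ B : Finset X, B.card = d + 1 ∧ affineSpan ℝ (P '' (B : Set X)) = ⊤ := by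
  classical
  obtain ⟨t, hts, htspan, htind⟩ := exists_affineIndependent ℝ (Fin d → ℝ) (Set.range P)
  rw [hPfull] at htspan
  have htfin : t.Finite := finite_set_of_fin_dim_affineIndependent ℝ htind
  haveI : Fintype t := htfin.fintype
  have hcard : Fintype.card t = d + 1 := by
    have := (htind.affineSpan_eq_top_iff_card_eq_finrank_add_one).mp ?_
    · simpa [Module.finrank_fintype_fun_eq_card] using this
    · rwa [Subtype.range_coe]
  -- choose preimages
  have hpre : ∀ p : t, ∃ x : X, P x = (p : Fin d → ℝ) := by
    intro p
    obtain ⟨x, hx⟩ := hts p.2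
    exact ⟨x, hx⟩
  choose f hf using hpre
  have hfinj : Function.Injective f := by
    intro a b hab
    apply Subtype.ext
    rw [← hf a, ← hf b, hab]
  refine ⟨Finset.univ.image f, ?_, ?_⟩
  · rw [Finset.card_image_of_injective _ hfinj, Finset.card_univ, hcard]
  · have himg : P '' ((Finset.univ.image f : Finset X) : Set X) = t := by
      ext p
      constructor
      · rintro ⟨x, hx, rfl⟩
        simp only [Finset.coe_image, Finset.coe_univ, Set.image_univ, Set.mem_range] at hx
        obtain ⟨a, rfl⟩ := hx
        rw [hf a]; exact a.2
      · intro hp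
        exact ⟨f ⟨p, hp⟩, by simp, hf _⟩
    rw [himg, htspan]

/-- reduction to corank-1 subconfigurations. -/
theorem reduction_to_corank_one (d : ℕ) (hd : 2 ≤ d) {X : Type} [Fintype X]
    (hX : d + 2 ≤ Fintype.card X) (P Q : X → Fin d → ℝ)
    (hPfull : affineSpan ℝ (Set.range P) = ⊤)
    (hQfull : affineSpan ℝ (Set.range Q) = ⊤)
    (hne : ¬ DirectlyAffEquivOn P Q Set.univ) :
    ∃ Y : Finset X, Y.card = d + 2 ∧
      affineSpan ℝ (P '' (Y : Set X)) = ⊤ ∧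
      ¬ DirectlyAffEquivOn P Q (Y : Set X) := by
  classical
  obtain ⟨B, hBcard, hBspan⟩ := exists_spanning_finset P hPfull
  by_contra hcon
  push_neg at hcon
  -- for every x ∉ B, the configuration on insert x B is equivalent
  have key : ∀ x : X, x ∉ B → DirectlyAffEquivOn P Q ((insert x B : Finset X) : Set X) := by
    intro x hx
    have hcard : (insert x B).card = d + 2 := by
      rw [Finset.card_insert_of_notMem hx, hBcard]
    have hspan : affineSpan ℝ (P '' ((insert x B : Finset X) : Set X)) = ⊤ := by
      refine top_unique ?_
      rw [← hBspan]
      exact affineSpan_mono ℝ (Set.image_mono (by simp [Finset.coe_insert]))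
    obtain ⟨φ, hφdet, hφ⟩ := hcon (insert x B) hcard hspan
    exact ⟨φ, hφdet, hφ⟩
  -- pick a base point x₀ outside B
  have hexists : ∃ x₀ : X, x₀ ∉ B := by
    by_contra h
    push_neg at h
    have : Fintype.card X ≤ B.card := by
      rw [← Finset.card_univ]
      exact Finset.card_le_card (fun a _ => h a)
    omega
  obtain ⟨x₀, hx₀⟩ := hexists
  obtain ⟨φ₀, hφ₀det, hφ₀⟩ := key x₀ hx₀
  -- the witnesses must agree with φ₀ on all of X
  apply hne
  refine ⟨φ₀, hφ₀det, ?_⟩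
  intro i _
  by_cases hiB : i ∈ B
  · exact hφ₀ i (by simp [hiB])
  · obtain ⟨φ, hφdet, hφ⟩ := key i hiB
    have heq : (φ : (Fin d → ℝ) →ᵃ[ℝ] (Fin d → ℝ)) = (φ₀ : (Fin d → ℝ) →ᵃ[ℝ] (Fin d → ℝ)) := by
      refine affineMap_eq_of_eqOn_span hBspan ?_
      rintro p ⟨b, hb, rfl⟩
      have h1 := hφ b (by simp [hb])
      have h2 := hφ₀ b (by simp [hb])
      simp only [AffineEquiv.coe_toAffineMap]
      rw [← h1, ← h2]
    have hφi := hφ i (by simp)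
    calc Q i = φ (P i) := hφi
      _ = φ₀ (P i) := by
          have := congrFun (congrArg (fun f : (Fin d → ℝ) →ᵃ[ℝ] (Fin d → ℝ) => (f : (Fin d → ℝ) → (Fin d → ℝ))) heq) (P i)
          simpa using this
end
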